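/- arXiv:1602.03941 — 6 statements merged into one kernel-verified Lean document; each statement's English description precedes it below -/
import Mathlib

section
/- Let H be a countable group and let d̂ : H × H → [0,∞] be an extended metric (symmetric, vanishing exactly on the diagonal, satisfying the triangle inequality, possibly taking the value ∞) which is left-invariant (d̂(gh, gk) = d̂(h, k) for all g, h, k ∈ H) and proper (for every real r ≥ 0 and every h ∈ H, the ball {k ∈ H | d̂(h, k) ≤ r} is finite). Then there exists a left-invariant metric d̃ : H × H → ℝ such that (a) d̃(h, k) ≤ d̂(h, k) for all h, k ∈ H, and (b) d̃ is proper, i.e., every ball of finite radius with respect to d̃ has finitely many elements. -/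
open scoped ENNReal Pointwise

/-!
Fix an injection `n : H → ℕ` and use the weight `w s = min (dhat 1 s) (1 + n s + n s⁻¹)`: it is
finite, symmetric, positive off `1`, bounded by `dhat 1 ·`, and still has finite sublevel sets.
The weighted word length `N g = inf {∑ w sᵢ | s₁ ⋯ sₘ = g}` is a group seminorm below `w`, so
`dtil h k = N (h⁻¹ * k)` is a left-invariant pseudometric below `dhat`. Since only finitely many
`s` have `w s ≤ 1`, `w ≥ ε > 0` off `1`; hence `N` vanishes only at `1`, and an element with
`N g ≤ r` is a product of at most `(r + 1) / ε` factors of weight at most `r + 1`, of which there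
are finitely many.
-/

theorem List.prod_filter_ne_one {M : Type*} [Monoid M] [DecidableEq M] (L : List M) :
    (L.filter (· ≠ 1)).prod = L.prod := by
  induction L with
  | nil => rfl
  | cons a L ih => by_cases h : a = 1 <;> simp_all

theorem Set.Finite.setOf_list_prod {M : Type*} [Monoid M] {W : Set M} (hW : W.Finite) (n : ℕ) :
    {g | ∃ L : List M, L.length ≤ n ∧ (∀ s ∈ L, s ∈ W) ∧ L.prod = g}.Finite := by
  have := hW.to_subtype
  refine ((List.finite_length_le W n).image fun L => (L.map (↑)).prod).subset ?_
  rintro g ⟨L, hlen, hLW, rfl⟩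
  lift L to List W using hLW
  exact ⟨L, by simpa using hlen, rfl⟩

theorem List.forall_mem_map_nonneg {α : Type*} {f : α → ℝ} (hf : 0 ≤ f) (L : List α) :
    ∀ x ∈ L.map f, 0 ≤ x := by
  simpa using fun a _ => hf a

namespace GroupSeminorm

variable {G : Type*} [Group G] {w : G → ℝ}

def weightedLengths (w : G → ℝ) (g : G) : Set ℝ :=
  (fun L : List G => (L.map w).sum) '' {L | L.prod = g}

lemma weightedLengths_nonempty (g : G) : (weightedLengths w g).Nonempty :=
  ⟨_, [g], by simp, rfl⟩

lemma weightedLengths_bddBelow (hw₀ : 0 ≤ w) (g : G) : BddBelow (weightedLengths w g) :=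
  ⟨0, by rintro _ ⟨L, -, rfl⟩; exact List.sum_nonneg (L.forall_mem_map_nonneg hw₀)⟩

lemma weightedLengths_mul_subset (x y : G) :
    weightedLengths w x + weightedLengths w y ⊆ weightedLengths w (x * y) := by
  rintro _ ⟨_, ⟨L, rfl, rfl⟩, _, ⟨M, rfl, rfl⟩, rfl⟩
  exact ⟨L ++ M, by simp, by simp⟩

lemma weightedLengths_inv_subset (hw_inv : ∀ g, w g⁻¹ = w g) (x : G) :
    weightedLengths w x ⊆ weightedLengths w x⁻¹ := by
  rintro _ ⟨L, rfl, rfl⟩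
  exact ⟨(L.map (·⁻¹)).reverse, (L.prod_inv_reverse).symm, by simp [Function.comp_def, hw_inv]⟩

/-- The largest group seminorm bounded above by `w`. -/
noncomputable def ofWeight (w : G → ℝ) (hw₀ : 0 ≤ w) (hw_inv : ∀ g, w g⁻¹ = w g) :
    GroupSeminorm G where
  toFun g := sInf (weightedLengths w g)
  map_one' := le_antisymm (csInf_le (weightedLengths_bddBelow hw₀ 1) ⟨[], rfl, rfl⟩)
    (le_csInf (weightedLengths_nonempty 1) fun _ ⟨L, _, hL⟩ =>
      hL ▸ List.sum_nonneg (L.forall_mem_map_nonneg hw₀))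
  mul_le' x y := by
    rw [← csInf_add (weightedLengths_nonempty x) (weightedLengths_bddBelow hw₀ x)
      (weightedLengths_nonempty y) (weightedLengths_bddBelow hw₀ y)]
    exact csInf_le_csInf (weightedLengths_bddBelow hw₀ _)
      ((weightedLengths_nonempty x).add (weightedLengths_nonempty y))
      (weightedLengths_mul_subset x y)
  inv' x := by
    rw [(weightedLengths_inv_subset hw_inv x).antisymm (by
      simpa using weightedLengths_inv_subset hw_inv x⁻¹)]

variable (hw₀ : 0 ≤ w) (hw_inv : ∀ g, w g⁻¹ = w g)

lemma ofWeight_prod_le (L : List G) : ofWeight w hw₀ hw_inv L.prod ≤ (L.map w).sum :=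
  csInf_le (weightedLengths_bddBelow hw₀ _) ⟨L, rfl, rfl⟩

lemma ofWeight_le (g : G) : ofWeight w hw₀ hw_inv g ≤ w g := by
  simpa using ofWeight_prod_le hw₀ hw_inv [g]

lemma le_ofWeight {ε : ℝ} (hε : ∀ s ≠ 1, ε ≤ w s) {g : G} (hg : g ≠ 1) :
    ε ≤ ofWeight w hw₀ hw_inv g := by
  refine le_csInf (weightedLengths_nonempty g) ?_
  rintro _ ⟨L, rfl, rfl⟩
  obtain ⟨s, hsL, hs⟩ : ∃ s ∈ L, s ≠ 1 := by
    contrapose! hg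
    exact List.prod_eq_one hg
  exact (hε s hs).trans
    (List.single_le_sum (L.forall_mem_map_nonneg hw₀) _ (List.mem_map_of_mem hsL))

lemma ofWeight_eq_zero_iff {ε : ℝ} (hε₀ : 0 < ε) (hε : ∀ s ≠ 1, ε ≤ w s) {g : G} :
    ofWeight w hw₀ hw_inv g = 0 ↔ g = 1 :=
  ⟨fun h0 => by_contra fun hg => (hε₀.trans_le (le_ofWeight hw₀ hw_inv hε hg)).ne' h0,
    fun hg => hg ▸ map_one_eq_zero _⟩

lemma finite_setOf_ofWeight_le (hfin : ∀ r, {s | w s ≤ r}.Finite) {ε : ℝ} (hε₀ : 0 < ε)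
    (hε : ∀ s ≠ 1, ε ≤ w s) (r : ℝ) : {g | ofWeight w hw₀ hw_inv g ≤ r}.Finite := by
  classical
  refine ((hfin (r + 1)).setOf_list_prod ⌊(r + 1) / ε⌋₊).subset fun g hg => ?_
  obtain ⟨_, ⟨L, rfl, rfl⟩, hL⟩ :=
    exists_lt_of_csInf_lt (weightedLengths_nonempty _) (hg.trans_lt (lt_add_one r))
  -- Dropping the trivial factors keeps the product and makes every weight at least `ε`.
  set L' := L.filter (· ≠ 1)
  have hL' : ∀ s ∈ L', ε ≤ w s := fun s hs => hε s (by simpa [L'] using (List.mem_filter.1 hs).2)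
  have hsum : (L'.map w).sum < r + 1 :=
    ((List.filter_sublist.map w).sum_le_sum (L.forall_mem_map_nonneg hw₀)).trans_lt hL
  refine ⟨L', ?_, fun s hs => ?_, L.prod_filter_ne_one⟩
  · have := (L'.map w).card_nsmul_le_sum ε (by simpa using hL')
    refine Nat.le_floor ((le_div_iff₀ hε₀).2 ?_)
    simp only [List.length_map, nsmul_eq_mul] at this
    linarith
  · exact (List.single_le_sum (L'.forall_mem_map_nonneg hw₀) _ (List.mem_map_of_mem hs)).trans
      hsum.le

lemma apply_inv_mul_comm (p : GroupSeminorm G) (h k : G) : p (h⁻¹ * k) = p (k⁻¹ * h) := by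
  rw [← map_inv_eq_map p, mul_inv_rev, inv_inv]

lemma apply_inv_mul_le (p : GroupSeminorm G) (h k l : G) :
    p (h⁻¹ * l) ≤ p (h⁻¹ * k) + p (k⁻¹ * l) := by
  simpa [mul_assoc] using map_mul_le_add p (h⁻¹ * k) (k⁻¹ * l)

end GroupSeminorm

theorem exists_pos_le_of_finite_sublevel {α : Type*} {f : α → ℝ} {a : α}
    (hfin : {x | f x ≤ 1}.Finite) (hpos : ∀ x ≠ a, 0 < f x) : ∃ ε > 0, ∀ x ≠ a, ε ≤ f x := by
  classical
  set T := insert 1 ((hfin.toFinset.erase a).image f)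
  have hT : T.Nonempty := Finset.insert_nonempty _ _
  refine ⟨T.min' hT, (T.lt_min'_iff hT).2 ?_, fun x hx => ?_⟩
  · intro y hy
    simp only [T, Finset.mem_insert, Finset.mem_image, Finset.mem_erase] at hy
    rcases hy with rfl | ⟨x, ⟨hx, -⟩, rfl⟩
    exacts [one_pos, hpos x hx]
  · by_cases h : f x ≤ 1
    · exact T.min'_le _
        (Finset.mem_insert_of_mem (Finset.mem_image_of_mem f (by simpa [hx] using h)))
    · exact (T.min'_le 1 (by simp [T])).trans (not_le.1 h).le

section LeftInvariant

variable {H : Type*} [Group H] {d : H → H → ℝ≥0∞}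

lemma apply_eq_apply_one_inv_mul (hinv : ∀ g h k : H, d (g * h) (g * k) = d h k) (h k : H) :
    d h k = d 1 (h⁻¹ * k) := by
  simpa using (hinv h⁻¹ h k).symm

lemma apply_one_inv (hsymm : ∀ h k : H, d h k = d k h)
    (hinv : ∀ g h k : H, d (g * h) (g * k) = d h k) (s : H) : d 1 s⁻¹ = d 1 s := by
  rw [apply_eq_apply_one_inv_mul hinv 1 s, hsymm, apply_eq_apply_one_inv_mul hinv]
  simp

end LeftInvariant

section CappedWeight

variable {H : Type*} [Group H] (d : H → H → ℝ≥0∞) (enc : H → ℕ)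

/-- For injective `enc` the cap has finite sublevel sets, so capping keeps the weight proper. -/
noncomputable def cappedWeight (s : H) : ℝ :=
  (min (d 1 s) ((1 + enc s + enc s⁻¹ : ℕ) : ℝ≥0∞)).toReal

lemma cappedWeight_nonneg : 0 ≤ cappedWeight d enc := fun _ => ENNReal.toReal_nonneg

lemma min_cap_ne_top (s : H) : min (d 1 s) ((1 + enc s + enc s⁻¹ : ℕ) : ℝ≥0∞) ≠ ⊤ :=
  ne_top_of_le_ne_top (ENNReal.natCast_ne_top _) (min_le_right _ _)

lemma ofReal_cappedWeight_le (s : H) : ENNReal.ofReal (cappedWeight d enc s) ≤ d 1 s := by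
  rw [cappedWeight, ENNReal.ofReal_toReal (min_cap_ne_top d enc s)]
  exact min_le_left _ _

variable {d enc}

lemma cappedWeight_inv (hsymm : ∀ h k : H, d h k = d k h)
    (hinv : ∀ g h k : H, d (g * h) (g * k) = d h k) (s : H) :
    cappedWeight d enc s⁻¹ = cappedWeight d enc s := by
  rw [cappedWeight, cappedWeight, apply_one_inv hsymm hinv, inv_inv, add_right_comm 1]

lemma cappedWeight_pos (hzero : ∀ h k : H, d h k = 0 ↔ h = k) {s : H} (hs : s ≠ 1) :
    0 < cappedWeight d enc s := by
  refine ENNReal.toReal_pos ?_ (min_cap_ne_top d enc s)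
  simp [hzero, Ne.symm hs]

lemma finite_setOf_cappedWeight_le (henc : Function.Injective enc)
    (hproper : ∀ r : ℝ, 0 ≤ r → {s : H | d 1 s ≤ ENNReal.ofReal r}.Finite) (r : ℝ) :
    {s | cappedWeight d enc s ≤ r}.Finite := by
  refine ((hproper (max r 0) (le_max_right r 0)).union
    ((Set.finite_Iic ⌊r⌋₊).preimage henc.injOn)).subset fun s hs => ?_
  have hmin : min (d 1 s) ((1 + enc s + enc s⁻¹ : ℕ) : ℝ≥0∞) ≤ ENNReal.ofReal r := by
    rw [← ENNReal.ofReal_toReal (min_cap_ne_top d enc s)]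
    exact ENNReal.ofReal_le_ofReal hs
  rcases min_le_iff.1 hmin with hd | hcap
  · exact Or.inl (hd.trans (ENNReal.ofReal_le_ofReal (le_max_left r 0)))
  · refine Or.inr (Nat.le_floor ?_)
    have := (ENNReal.natCast_le_ofReal (by omega)).1 hcap
    push_cast at this
    linarith [(enc s⁻¹).cast_nonneg (α := ℝ)]

end CappedWeight

theorem modified_relative_metric_general
    {H : Type*} [Group H] [Countable H]
    (dhat : H → H → ℝ≥0∞)
    (hzero : ∀ h k : H, dhat h k = 0 ↔ h = k)
    (hsymm : ∀ h k : H, dhat h k = dhat k h)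
    (hinv : ∀ g h k : H, dhat (g * h) (g * k) = dhat h k)
    (hproper : ∀ r : ℝ, 0 ≤ r → ∀ h : H,
      {k : H | dhat h k ≤ ENNReal.ofReal r}.Finite) :
    ∃ dtil : H → H → ℝ,
      (∀ h k : H, 0 ≤ dtil h k) ∧
      (∀ h k : H, dtil h k = 0 ↔ h = k) ∧
      (∀ h k : H, dtil h k = dtil k h) ∧
      (∀ h k l : H, dtil h l ≤ dtil h k + dtil k l) ∧
      (∀ g h k : H, dtil (g * h) (g * k) = dtil h k) ∧
      (∀ h k : H, ENNReal.ofReal (dtil h k) ≤ dhat h k) ∧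
      (∀ h : H, ∀ r : ℝ, {k : H | dtil h k ≤ r}.Finite) := by
  obtain ⟨enc, henc⟩ := Countable.exists_injective_nat H
  have hfin := finite_setOf_cappedWeight_le henc fun r hr => hproper r hr 1
  obtain ⟨ε, hε₀, hε⟩ := exists_pos_le_of_finite_sublevel (hfin 1) fun _ => cappedWeight_pos hzero
  set N := GroupSeminorm.ofWeight _ (cappedWeight_nonneg dhat enc) (cappedWeight_inv hsymm hinv)
  refine ⟨fun h k => N (h⁻¹ * k), fun h k => apply_nonneg N _, fun h k => ?_,
    N.apply_inv_mul_comm, N.apply_inv_mul_le, fun g h k => by simp [mul_assoc], fun h k => ?_,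
    fun h r => ?_⟩
  · exact (GroupSeminorm.ofWeight_eq_zero_iff _ _ hε₀ hε).trans inv_mul_eq_one
  · rw [apply_eq_apply_one_inv_mul hinv h k]
    exact (ENNReal.ofReal_le_ofReal (GroupSeminorm.ofWeight_le _ _ _)).trans
      (ofReal_cappedWeight_le _ _ _)
  · exact (GroupSeminorm.finite_setOf_ofWeight_le _ _ hfin hε₀ hε r).preimage
      (mul_right_injective h⁻¹).injOn

/-- A proper left-invariant extended metric on a countable group
can be replaced by a proper left-invariant real-valued metric bounded above by it. -/
theorem modified_relative_metric
    {H : Type*} [Group H] [Countable H]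
    (dhat : H → H → ℝ≥0∞)
    (hzero : ∀ h k : H, dhat h k = 0 ↔ h = k)
    (hsymm : ∀ h k : H, dhat h k = dhat k h)
    (htri : ∀ h k l : H, dhat h l ≤ dhat h k + dhat k l)
    (hinv : ∀ g h k : H, dhat (g * h) (g * k) = dhat h k)
    (hproper : ∀ r : ℝ, 0 ≤ r → ∀ h : H,
      {k : H | dhat h k ≤ ENNReal.ofReal r}.Finite) :
    ∃ dtil : H → H → ℝ,
      (∀ h k : H, 0 ≤ dtil h k) ∧
      (∀ h k : H, dtil h k = 0 ↔ h = k) ∧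
      (∀ h k : H, dtil h k = dtil k h) ∧
      (∀ h k l : H, dtil h l ≤ dtil h k + dtil k l) ∧
      (∀ g h k : H, dtil (g * h) (g * k) = dtil h k) ∧
      (∀ h k : H, ENNReal.ofReal (dtil h k) ≤ dhat h k) ∧
      (∀ h : H, ∀ r : ℝ, {k : H | dtil h k ≤ r}.Finite) :=
  modified_relative_metric_general dhat hzero hsymm hinv hproper
end

section
/- Let S be a metric space, let x, y ∈ S, let p be a geodesic from x to y (an isometric embedding γ : [0, d(x,y)] → S with γ(0) = x and γ(d(x,y)) = y), and let q be a continuous path from x to y (a continuous map q : [0,1] → S with q(0) = x, q(1) = y). Suppose k ≥ 0 and the image of q is contained in the closed k-neighborhood of the image of p, i.e., for every t ∈ [0,1] there exists s ∈ [0, d(x,y)] with dist(q(t), γ(s)) ≤ k. Then the image of p is contained in the closed 2k-neighborhood of the image of q: for every s ∈ [0, d(x,y)] there exists t ∈ [0,1] with dist(γ(s), q(t)) ≤ 2k. -/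
/-- If a path `q` from `x` to `y` lies in the closed `k`-neighborhood of a
geodesic `p` from `x` to `y`, then `p` lies in the closed `2k`-neighborhood of `q`. -/
theorem geodesic_in_double_neighborhood_of_path
    {S : Type*} [MetricSpace S] (x y : S) (k : ℝ) (hk : 0 ≤ k)
    (γ : ℝ → S)
    (hγx : γ 0 = x) (hγy : γ (dist x y) = y)
    (hγiso : ∀ s ∈ Set.Icc (0 : ℝ) (dist x y), ∀ t ∈ Set.Icc (0 : ℝ) (dist x y),
      dist (γ s) (γ t) = |s - t|)
    (q : ℝ → S)
    (hqcont : ContinuousOn q (Set.Icc (0 : ℝ) 1))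
    (hqx : q 0 = x) (hqy : q 1 = y)
    (hnbhd : ∀ t ∈ Set.Icc (0 : ℝ) 1, ∃ s ∈ Set.Icc (0 : ℝ) (dist x y),
      dist (q t) (γ s) ≤ k) :
    ∀ s ∈ Set.Icc (0 : ℝ) (dist x y), ∃ t ∈ Set.Icc (0 : ℝ) 1,
      dist (γ s) (q t) ≤ 2 * k := by
  intro s hs
  set D := dist x y with hD
  obtain ⟨hs0, hsD⟩ := hs
  -- continuity of γ on subintervals
  have hγcont : ∀ a b : ℝ, Set.Icc a b ⊆ Set.Icc 0 D → ContinuousOn γ (Set.Icc a b) := by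
    intro a b hab
    refine (LipschitzOnWith.of_dist_le_mul ?_).continuousOn (K := 1)
    intro u hu v hv
    rw [hγiso u (hab hu) v (hab hv)]
    simp [Real.dist_eq]
  -- the two compact pieces of the geodesic
  set K₁ : Set S := γ '' Set.Icc 0 s with hK₁
  set K₂ : Set S := γ '' Set.Icc s D with hK₂
  have hK₁c : IsCompact K₁ := (isCompact_Icc).image_of_continuousOn
    (hγcont 0 s (Set.Icc_subset_Icc le_rfl hsD))
  have hK₂c : IsCompact K₂ := (isCompact_Icc).image_of_continuousOn
    (hγcont s D (Set.Icc_subset_Icc hs0 le_rfl))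
  have hK₁ne : K₁.Nonempty := ⟨γ 0, ⟨0, ⟨le_rfl, hs0⟩, rfl⟩⟩
  have hK₂ne : K₂.Nonempty := ⟨γ s, ⟨s, ⟨le_rfl, hsD⟩, rfl⟩⟩
  -- the two closed sets
  set A : Set ℝ := Set.Icc 0 1 ∩ q ⁻¹' {z | Metric.infDist z K₁ ≤ k} with hA
  set B : Set ℝ := Set.Icc 0 1 ∩ q ⁻¹' {z | Metric.infDist z K₂ ≤ k} with hB
  have hclosed : ∀ K : Set S, IsClosed {z | Metric.infDist z K ≤ k} :=
    fun K => isClosed_le (Metric.continuous_infDist_pt K) continuous_const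
  have hAc : IsClosed A := hqcont.preimage_isClosed_of_isClosed isClosed_Icc (hclosed K₁)
  have hBc : IsClosed B := hqcont.preimage_isClosed_of_isClosed isClosed_Icc (hclosed K₂)
  -- every point of [0,1] is in A ∪ B
  have hcover : Set.Icc (0:ℝ) 1 ⊆ A ∪ B := by
    intro t ht
    obtain ⟨u, hu, hqu⟩ := hnbhd t ht
    rcases le_total u s with h | h
    · refine Or.inl ⟨ht, ?_⟩
      exact (Metric.infDist_le_dist_of_mem (Set.mem_image_of_mem γ (Set.mem_Icc.mpr ⟨hu.1, h⟩))).trans hqu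
    · refine Or.inr ⟨ht, ?_⟩
      exact (Metric.infDist_le_dist_of_mem (Set.mem_image_of_mem γ (Set.mem_Icc.mpr ⟨h, hu.2⟩))).trans hqu
  have h0A : (0:ℝ) ∈ A := by
    refine ⟨⟨le_rfl, zero_le_one⟩, ?_⟩
    have : Metric.infDist (q 0) K₁ ≤ dist (q 0) (γ 0) :=
      Metric.infDist_le_dist_of_mem (Set.mem_image_of_mem γ (Set.mem_Icc.mpr ⟨le_rfl, hs0⟩))
    refine this.trans ?_
    rw [hqx, hγx, dist_self]
    exact hk
  have h1B : (1:ℝ) ∈ B := by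
    refine ⟨⟨zero_le_one, le_rfl⟩, ?_⟩
    have : Metric.infDist (q 1) K₂ ≤ dist (q 1) (γ D) :=
      Metric.infDist_le_dist_of_mem (Set.mem_image_of_mem γ (Set.mem_Icc.mpr ⟨hsD, le_rfl⟩))
    refine this.trans ?_
    rw [hqy, hγy, dist_self]
    exact hk
  -- find a point in A ∩ B
  have hABne : (A ∩ B).Nonempty := by
    set t₀ := sSup A with ht₀
    have hAsub : A ⊆ Set.Icc 0 1 := fun t ht => ht.1
    have hAne : A.Nonempty := ⟨0, h0A⟩
    have hAbdd : BddAbove A := ⟨1, fun t ht => (hAsub ht).2⟩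
    have ht₀A : t₀ ∈ A := hAc.csSup_mem hAne hAbdd
    have ht₀1 : t₀ ≤ 1 := (hAsub ht₀A).2
    rcases eq_or_lt_of_le ht₀1 with h | h
    · exact ⟨t₀, ht₀A, h ▸ h1B⟩
    · have hIocB : Set.Ioc t₀ 1 ⊆ B := by
        intro t ht
        have htIcc : t ∈ Set.Icc (0:ℝ) 1 := ⟨(hAsub ht₀A).1.trans ht.1.le, ht.2⟩
        rcases hcover htIcc with hA' | hB'
        · exact absurd (le_csSup hAbdd hA') (not_le.mpr ht.1)
        · exact hB'
      have : t₀ ∈ closure (Set.Ioc t₀ 1) := by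
        rw [closure_Ioc h.ne]
        exact ⟨le_rfl, ht₀1⟩
      have ht₀B : t₀ ∈ B := hBc.closure_subset ((closure_mono hIocB) this)
      exact ⟨t₀, ht₀A, ht₀B⟩
  obtain ⟨t, htA, htB⟩ := hABne
  -- extract nearest points
  obtain ⟨z₁, hz₁K, hz₁d⟩ := hK₁c.exists_infDist_eq_dist hK₁ne (q t)
  obtain ⟨z₂, hz₂K, hz₂d⟩ := hK₂c.exists_infDist_eq_dist hK₂ne (q t)
  obtain ⟨u, hu, rfl⟩ := hz₁K
  obtain ⟨v, hv, rfl⟩ := hz₂K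
  have hdu : dist (q t) (γ u) ≤ k := hz₁d ▸ htA.2
  have hdv : dist (q t) (γ v) ≤ k := hz₂d ▸ htB.2
  have huD : u ∈ Set.Icc (0:ℝ) D := ⟨hu.1, hu.2.trans hsD⟩
  have hvD : v ∈ Set.Icc (0:ℝ) D := ⟨hs0.trans hv.1, hv.2⟩
  have hsD' : s ∈ Set.Icc (0:ℝ) D := ⟨hs0, hsD⟩
  have huv : v - u ≤ 2 * k := by
    have := hγiso u huD v hvD
    have hle : dist (γ u) (γ v) ≤ 2 * k :=
      (dist_triangle_left _ _ (q t)).trans (by linarith)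
    rw [this] at hle
    have := abs_le.mp hle
    linarith [this.1]
  rcases le_or_gt (s - u) k with h | h
  · refine ⟨t, htA.1, ?_⟩
    have h1 : dist (γ s) (γ u) = |s - u| := hγiso s hsD' u huD
    have h2 : dist (γ s) (q t) ≤ dist (γ s) (γ u) + dist (γ u) (q t) := dist_triangle _ _ _
    rw [h1, abs_of_nonneg (by linarith [hu.2])] at h2
    rw [dist_comm (γ u) (q t)] at h2
    linarith
  · refine ⟨t, htA.1, ?_⟩
    have hvs : v - s ≤ k := by linarith [hu.2, hv.1]
    have h1 : dist (γ s) (γ v) = |s - v| := hγiso s hsD' v hvD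
    have h2 : dist (γ s) (q t) ≤ dist (γ s) (γ v) + dist (γ v) (q t) := dist_triangle _ _ _
    rw [h1, abs_of_nonpos (by linarith [hv.1])] at h2
    rw [dist_comm (γ v) (q t)] at h2
    linarith
end

section
/- Let Y be a connected simple graph, equipped with the shortest-path metric d_Y on its vertices, and suppose Y is a quasi-tree: there exist a simple graph T that is a tree (connected and acyclic), with shortest-path metric d_T, constants λ ≥ 1, C ≥ 0, and a map q from the vertices of Y to the vertices of T such that (1/λ) d_Y(a,b) − C ≤ d_T(q(a), q(b)) ≤ λ d_Y(a,b) + C for all vertices a, b of Y, and every vertex of T is at distance at most C from the image of q. Then there exists μ > 0 such that for all vertices x, y of Y, every geodesic walk p from x to y (a walk whose length equals d_Y(x,y)), every vertex z on p, and every walk α from x to y in Y, some vertex w of α satisfies d_Y(z, w) ≤ μ. -/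
open SimpleGraph

private lemma dist_getVert_le' {V : Type*} {G : SimpleGraph V} (hG : G.Connected) {u v : V}
    (w : G.Walk u v) (i d : ℕ) :
    G.dist (w.getVert i) (w.getVert (i + d)) ≤ d := by
  induction d with
  | zero => simp
  | succ n ih =>
    have h1 : G.dist (w.getVert (i + n)) (w.getVert (i + (n + 1))) ≤ 1 := by
      by_cases h : i + n < w.length
      · have := SimpleGraph.dist_le (Walk.cons (w.adj_getVert_succ h) Walk.nil)
        simpa [← add_assoc] using this
      · push_neg at h
        rw [w.getVert_of_length_le h, w.getVert_of_length_le (by omega : w.length ≤ i + (n+1))]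
        simp [SimpleGraph.dist_self]
    have h2 := hG.dist_triangle (u := w.getVert i) (v := w.getVert (i + n))
      (w := w.getVert (i + (n + 1)))
    omega

private lemma dist_getVert_le {V : Type*} {G : SimpleGraph V} (hG : G.Connected) {u v : V}
    (w : G.Walk u v) {i j : ℕ} (hij : i ≤ j) :
    G.dist (w.getVert i) (w.getVert j) ≤ j - i := by
  obtain ⟨d, rfl⟩ := Nat.exists_eq_add_of_le hij
  simpa using dist_getVert_le' hG w i d

private lemma geodesic_getVert {V : Type*} {G : SimpleGraph V} (hG : G.Connected) {x y : V}
    {w : G.Walk x y} (hw : w.length = G.dist x y) {i j : ℕ} (hij : i ≤ j) (hj : j ≤ w.length) :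
    G.dist (w.getVert i) (w.getVert j) = j - i := by
  have h1 : G.dist x (w.getVert i) ≤ i := by
    simpa using dist_getVert_le hG w (Nat.zero_le i)
  have h2 := dist_getVert_le hG w hij
  have h3 : G.dist (w.getVert j) y ≤ w.length - j := by
    have := dist_getVert_le hG w hj
    simpa [w.getVert_length] using this
  have t1 := hG.dist_triangle (u := x) (v := w.getVert i) (w := w.getVert j)
  have t2 := hG.dist_triangle (u := x) (v := w.getVert j) (w := y)
  omega

private lemma geodesic_split {V : Type*} {G : SimpleGraph V} [DecidableEq V] (hG : G.Connected)
    {u v z : V} {w : G.Walk u v} (hw : w.length = G.dist u v) (hz : z ∈ w.support) :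
    (w.takeUntil z hz).length = G.dist u z ∧ (w.dropUntil z hz).length = G.dist z v ∧
      G.dist u z + G.dist z v = G.dist u v := by
  have h1 : (w.takeUntil z hz).length + (w.dropUntil z hz).length = w.length := by
    rw [← Walk.length_append, Walk.take_spec]
  have h2 := SimpleGraph.dist_le (w.takeUntil z hz)
  have h3 := SimpleGraph.dist_le (w.dropUntil z hz)
  have h4 := hG.dist_triangle (u := u) (v := z) (w := v)
  omega

private lemma tree_path_length {V' : Type*} {T : SimpleGraph V'} (hT : T.IsTree) {a b : V'}
    {p : T.Walk a b} (hp : p.IsPath) : p.length = T.dist a b := by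
  obtain ⟨p₀, hp₀, hl⟩ := hT.isConnected.exists_path_of_dist a b
  obtain ⟨r, -, hr⟩ := hT.existsUnique_path a b
  rw [← hl, hr p hp, hr p₀ hp₀]

private lemma tree_median {V' : Type*} {T : SimpleGraph V'} [DecidableEq V'] (hT : T.IsTree)
    (u : V') {a b : V'} (P : T.Walk a b) (hPp : P.IsPath) (hPl : P.length = T.dist a b) :
    ∃ π, π ∈ P.support ∧ T.dist u π + T.dist π a = T.dist u a ∧
      T.dist u π + T.dist π b = T.dist u b := by
  have hTc := hT.isConnected
  obtain ⟨W, hWp, hWl⟩ := hTc.exists_path_of_dist u a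
  have haS : a ∈ (W.support.toFinset.filter (fun x => x ∈ P.support)) := by
    simp [List.mem_toFinset, W.end_mem_support, P.start_mem_support]
  obtain ⟨π, hπ, hmin⟩ := Finset.exists_min_image _ (fun x => T.dist u x) ⟨a, haS⟩
  simp only [Finset.mem_filter, List.mem_toFinset] at hπ
  obtain ⟨hπW, hπP⟩ := hπ
  obtain ⟨e1, e2, e3⟩ := geodesic_split hTc hWl hπW
  obtain ⟨f1, f2, f3⟩ := geodesic_split hTc hPl hπP
  refine ⟨π, hπP, e3, ?_⟩
  -- build the path u → π → b
  set t := W.takeUntil π hπW with ht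
  set dd := P.dropUntil π hπP with hdd
  have ht_path : t.IsPath := hWp.takeUntil hπW
  have hdd_path : dd.IsPath := hPp.dropUntil hπP
  have hkey : ∀ x, x ∈ t.support → x ∈ dd.support → x = π := by
    intro x hxt hxdd
    obtain ⟨g1, g2, g3⟩ := geodesic_split hTc e1 hxt
    have hxW : x ∈ W.support := W.support_takeUntil_subset hπW hxt
    have hxP : x ∈ P.support := P.support_dropUntil_subset hπP hxdd
    have hxS : x ∈ (W.support.toFinset.filter (fun y => y ∈ P.support)) := by
      simp [List.mem_toFinset, hxW, hxP]
    have := hmin x hxS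
    have hzero : T.dist x π = 0 := by omega
    exact (hTc.dist_eq_zero_iff).mp hzero
  have happ : (t.append dd).IsPath := by
    rw [Walk.isPath_def, Walk.support_append]
    refine List.Nodup.append ht_path.support_nodup
      ((List.tail_sublist _).nodup hdd_path.support_nodup) ?_
    intro x hxt hxtail
    have hx : x = π := hkey x hxt (List.mem_of_mem_tail hxtail)
    have : π ∉ dd.support.tail := by
      have hn := hdd_path.support_nodup
      rw [dd.support_eq_cons] at hn
      exact (List.nodup_cons.mp hn).1
    exact this (hx ▸ hxtail)
  have hlen := tree_path_length hT happ
  rw [Walk.length_append] at hlen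
  omega

private lemma tree_btw_cases {V' : Type*} {T : SimpleGraph V'} [DecidableEq V'] (hT : T.IsTree)
    (u v b m : V') (h : T.dist u m + T.dist m b = T.dist u b) :
    T.dist u m + T.dist m v = T.dist u v ∨ T.dist v m + T.dist m b = T.dist v b := by
  have hTc := hT.isConnected
  obtain ⟨P, hPp, hPl⟩ := hTc.exists_path_of_dist u b
  -- m lies on P
  obtain ⟨π, hπP, em1, em2⟩ := tree_median hT m P hPp hPl
  have hmπ : m = π := by
    obtain ⟨-, -, f3⟩ := geodesic_split hTc hPl hπP
    have c1 : T.dist u m = T.dist m u := SimpleGraph.dist_comm ..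
    have c2 : T.dist m π = T.dist π m := SimpleGraph.dist_comm ..
    have c3 : T.dist π u = T.dist u π := SimpleGraph.dist_comm ..
    have hz : T.dist m π = 0 := by omega
    exact (hTc.dist_eq_zero_iff).mp hz
  have hmP : m ∈ P.support := hmπ ▸ hπP
  -- median of v on P
  obtain ⟨ρ, hρP, ev1, ev2⟩ := tree_median hT v P hPp hPl
  obtain ⟨l1, l2, -⟩ := geodesic_split hTc hPl hρP
  have hsplit : m ∈ (P.takeUntil ρ hρP).support ∨ m ∈ (P.dropUntil ρ hρP).support := by
    rw [← Walk.mem_support_append_iff, Walk.take_spec]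
    exact hmP
  rcases hsplit with hmt | hmd
  · left
    obtain ⟨-, -, g3⟩ := geodesic_split hTc l1 hmt
    have t1 := hTc.dist_triangle (u := m) (v := ρ) (w := v)
    have t2 := hTc.dist_triangle (u := u) (v := m) (w := v)
    have c1 : T.dist ρ v = T.dist v ρ := SimpleGraph.dist_comm ..
    have c2 : T.dist u v = T.dist v u := SimpleGraph.dist_comm ..
    have c3 : T.dist ρ u = T.dist u ρ := SimpleGraph.dist_comm ..
    omega
  · right
    obtain ⟨-, -, g3⟩ := geodesic_split hTc l2 hmd
    have t1 := hTc.dist_triangle (u := v) (v := ρ) (w := m)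
    have t2 := hTc.dist_triangle (u := v) (v := m) (w := b)
    omega

set_option maxHeartbeats 1000000 in
/-- Bottleneck property for quasi-trees: in a connected graph
quasi-isometric to a tree, any path between two vertices passes uniformly close
to every vertex of any geodesic between them. -/
theorem quasiTree_bottleneck
    {V V' : Type*} (Y : SimpleGraph V) (hYconn : Y.Connected)
    (T : SimpleGraph V') (hT : T.IsTree)
    (lam C : ℝ) (hlam : 1 ≤ lam) (hC : 0 ≤ C)
    (q : V → V')
    (hlower : ∀ a b : V,
      (1 / lam) * (Y.dist a b : ℝ) - C ≤ (T.dist (q a) (q b) : ℝ))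
    (hupper : ∀ a b : V,
      (T.dist (q a) (q b) : ℝ) ≤ lam * (Y.dist a b : ℝ) + C)
    (hcobounded : ∀ t : V', ∃ a : V, (T.dist t (q a) : ℝ) ≤ C) :
    ∃ μ : ℝ, 0 < μ ∧
      ∀ (x y : V) (p : Y.Walk x y), p.length = Y.dist x y →
        ∀ z ∈ p.support, ∀ α : Y.Walk x y,
          ∃ w ∈ α.support, (Y.dist z w : ℝ) ≤ μ := by
  classical
  have hTc := hT.isConnected
  have hlam0 : (0:ℝ) < lam := by linarith
  set K : ℝ := lam + C with hK
  set D0 : ℝ := lam * lam * (2*K + C) + C + K with hD0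
  have hK0 : (0:ℝ) ≤ K := by rw [hK]; linarith
  have hD00 : (0:ℝ) ≤ D0 := by
    rw [hD0]
    have h1 : (0:ℝ) ≤ lam * lam * (2*K + C) :=
      mul_nonneg (mul_nonneg hlam0.le hlam0.le) (by linarith)
    linarith
  refine ⟨lam * (D0 + K + C) + 1, ?_, ?_⟩
  · have : (0:ℝ) ≤ lam * (D0 + K + C) := mul_nonneg hlam0.le (by linarith)
    linarith
  intro x y p hp z hz α
  obtain ⟨j, hjz, hjle⟩ := Walk.mem_support_iff_exists_getVert.mp hz
  subst hjz
  -- jump bound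
  have jump : ∀ {x' y' : V} (w : Y.Walk x' y') (i : ℕ),
      (T.dist (q (w.getVert i)) (q (w.getVert (i+1))) : ℝ) ≤ K := by
    intro x' y' w i
    have hd : Y.dist (w.getVert i) (w.getVert (i+1)) ≤ 1 := by
      simpa using dist_getVert_le hYconn w (Nat.le_succ i)
    have h2 := hupper (w.getVert i) (w.getVert (i+1))
    have hd' : (Y.dist (w.getVert i) (w.getVert (i+1)) : ℝ) ≤ 1 := by exact_mod_cast hd
    rw [hK]; nlinarith
  -- tree geodesic from q x to q y, and the median π of q z w.r.t. it
  obtain ⟨P, hPp, hPl⟩ := hTc.exists_path_of_dist (q x) (q y)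
  obtain ⟨π, hπP, eπ1, eπ2⟩ := tree_median hT (q (p.getVert j)) P hPp hPl
  obtain ⟨-, -, hπbtw⟩ := geodesic_split hTc hPl hπP
  -- chain along p
  obtain ⟨u, hu⟩ : ∃ u : ℕ → V', ∀ i, u i = q (p.getVert i) := ⟨_, fun _ => rfl⟩
  obtain ⟨Sv, hSv⟩ : ∃ Sv : V' → Prop, ∀ c, Sv c ↔
      ((T.dist c π + T.dist π (q x) = T.dist c (q x)) ∧
       (T.dist c π + T.dist π (q y) = T.dist c (q y)) ∧ c ≠ π) :=
    ⟨_, fun _ => Iff.rfl⟩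
  have crossing : ∀ c d : V', ¬ Sv c → Sv d →
      T.dist c π ≤ T.dist c d ∧ T.dist d π ≤ T.dist c d := by
    intro c d hc hd
    rw [hSv] at hd
    obtain ⟨hd1, hd2, hd3⟩ := hd
    by_cases hcπ : c = π
    · subst hcπ
      constructor
      · simp [SimpleGraph.dist_self]
      · rw [SimpleGraph.dist_comm]
    · have hor : ¬(T.dist c π + T.dist π (q x) = T.dist c (q x)) ∨
          ¬(T.dist c π + T.dist π (q y) = T.dist c (q y)) := by
        by_contra hcon
        push_neg at hcon
        exact hc ((hSv c).mpr ⟨hcon.1, hcon.2, hcπ⟩)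
      rcases hor with hcx | hcy
      · rcases tree_btw_cases hT d c (q x) π hd1 with hbt | hbt
        · have cc1 : T.dist c π = T.dist π c := SimpleGraph.dist_comm
          have cc2 : T.dist c d = T.dist d c := SimpleGraph.dist_comm
          omega
        · exact absurd hbt hcx
      · rcases tree_btw_cases hT d c (q y) π hd2 with hbt | hbt
        · have cc1 : T.dist c π = T.dist π c := SimpleGraph.dist_comm
          have cc2 : T.dist c d = T.dist d c := SimpleGraph.dist_comm
          omega
        · exact absurd hbt hcy
  -- Step A : the median π is close to q z
  have hDz : (T.dist (u j) π : ℝ) ≤ D0 := by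
    by_cases hzS : Sv (u j)
    · -- main case
      have hS0 : ¬ Sv (u 0) := by
        rw [hSv, hu, p.getVert_zero]
        rintro ⟨h1, -, h3⟩
        have hd0 : T.dist (q x) (q x) = 0 := SimpleGraph.dist_self
        have cc : T.dist (q x) π = T.dist π (q x) := SimpleGraph.dist_comm
        have hz0 : T.dist (q x) π = 0 := by omega
        exact h3 ((hTc.dist_eq_zero_iff).mp hz0)
      have hSL : ¬ Sv (u p.length) := by
        rw [hSv, hu, p.getVert_length]
        rintro ⟨-, h2, h3⟩
        have hd0 : T.dist (q y) (q y) = 0 := SimpleGraph.dist_self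
        have cc : T.dist (q y) π = T.dist π (q y) := SimpleGraph.dist_comm
        have hz0 : T.dist (q y) π = 0 := by omega
        exact h3 ((hTc.dist_eq_zero_iff).mp hz0)
      set i₁ := Nat.findGreatest (fun i => ¬ Sv (u i)) j with hi₁def
      have hi₁ : ¬ Sv (u i₁) := by
        have := Nat.findGreatest_spec (P := fun i => ¬ Sv (u i)) (Nat.zero_le j) hS0
        simpa [hi₁def] using this
      have hi₁j : i₁ ≤ j := Nat.findGreatest_le j
      have hi₁lt : i₁ < j := lt_of_le_of_ne hi₁j (fun h => hi₁ (h ▸ hzS))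
      have hS1 : Sv (u (i₁+1)) := by
        have := Nat.findGreatest_is_greatest (P := fun i => ¬ Sv (u i)) (n := j)
          (k := i₁ + 1) (by omega) (by omega)
        exact not_not.mp this
      have hcr1 := crossing (u i₁) (u (i₁+1)) hi₁ hS1
      have hjump1 : (T.dist (u i₁) (u (i₁+1)) : ℝ) ≤ K := by
        rw [hu, hu]; exact jump p i₁
      have hq1 : (T.dist (u i₁) π : ℝ) ≤ K :=
        le_trans (Nat.cast_le.mpr hcr1.1) hjump1
      -- find exit index on the right
      have hwit : ¬ Sv (u (j + (p.length - j))) := by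
        rwa [show j + (p.length - j) = p.length by omega]
      have hex : ∃ d, ¬ Sv (u (j + d)) := ⟨p.length - j, hwit⟩
      set d₀ := Nat.find hex with hd₀def
      have hd₀ : ¬ Sv (u (j + d₀)) := Nat.find_spec hex
      have hd₀pos : 0 < d₀ := by
        rcases Nat.eq_zero_or_pos d₀ with h | h
        · exact absurd (by rwa [h, Nat.add_zero] at hd₀) (not_not.mpr hzS)
        · exact h
      have hd₀le : d₀ ≤ p.length - j := Nat.find_min' hex hwit
      have hSmid2 : Sv (u (j + (d₀ - 1))) :=
        not_not.mp (Nat.find_min hex (show d₀ - 1 < d₀ by omega))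
      have hScr2 := crossing (u (j + d₀)) (u (j + (d₀ - 1))) hd₀ hSmid2
      have hjump2 : (T.dist (u (j + (d₀-1))) (u (j + (d₀-1) + 1)) : ℝ) ≤ K := by
        rw [hu, hu]; exact jump p _
      have hidx : j + (d₀ - 1) + 1 = j + d₀ := by omega
      have hq2 : (T.dist (u (j + d₀)) π : ℝ) ≤ K := by
        have h1 := hScr2.1
        have h2 : T.dist (u (j+d₀)) (u (j+(d₀-1))) =
            T.dist (u (j+(d₀-1))) (u (j+(d₀-1)+1)) := by
          rw [hidx]; exact SimpleGraph.dist_comm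
        rw [h2] at h1
        exact le_trans (Nat.cast_le.mpr h1) hjump2
      -- gap bound
      have hjdle : j + d₀ ≤ p.length := by omega
      have hYdY : Y.dist (p.getVert i₁) (p.getVert (j + d₀)) = (j + d₀) - i₁ :=
        geodesic_getVert hYconn hp (by omega) hjdle
      have htri12 : (T.dist (u i₁) (u (j+d₀)) : ℝ) ≤ 2*K := by
        have htr := hTc.dist_triangle (u := u i₁) (v := π) (w := u (j + d₀))
        have cc : T.dist π (u (j+d₀)) = T.dist (u (j+d₀)) π := SimpleGraph.dist_comm
        have hle : T.dist (u i₁) (u (j+d₀)) ≤ T.dist (u i₁) π + T.dist (u (j+d₀)) π := by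
          omega
        have hle' : (T.dist (u i₁) (u (j+d₀)) : ℝ) ≤
            (T.dist (u i₁) π : ℝ) + (T.dist (u (j+d₀)) π : ℝ) := by exact_mod_cast hle
        linarith
      have hlow := hlower (p.getVert i₁) (p.getVert (j + d₀))
      rw [hYdY, ← hu, ← hu] at hlow
      have h2 : (1/lam) * (((j + d₀) - i₁ : ℕ) : ℝ) - C ≤ 2*K := le_trans hlow htri12
      have hgap : (((j + d₀) - i₁ : ℕ) : ℝ) ≤ lam * (2*K + C) := by
        have h3 : lam * ((1/lam) * (((j + d₀) - i₁ : ℕ) : ℝ) - C) ≤ lam * (2*K) :=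
          mul_le_mul_of_nonneg_left (by linarith) hlam0.le
        have h4 : lam * ((1/lam) * (((j + d₀) - i₁ : ℕ) : ℝ)) = (((j + d₀) - i₁ : ℕ) : ℝ) := by
          field_simp
        nlinarith [h3, h4]
      -- conclude
      have hYd2 : Y.dist (p.getVert i₁) (p.getVert j) = j - i₁ :=
        geodesic_getVert hYconn hp hi₁lt.le hjle
      have hup := hupper (p.getVert i₁) (p.getVert j)
      rw [hYd2, ← hu, ← hu] at hup
      have htr : T.dist (u j) π ≤ T.dist (u i₁) (u j) + T.dist (u i₁) π := by
        have := hTc.dist_triangle (u := u j) (v := u i₁) (w := π)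
        have cc : T.dist (u j) (u i₁) = T.dist (u i₁) (u j) := SimpleGraph.dist_comm
        omega
      have htrR : (T.dist (u j) π : ℝ) ≤
          (T.dist (u i₁) (u j) : ℝ) + (T.dist (u i₁) π : ℝ) := by exact_mod_cast htr
      have hnle : ((j - i₁:ℕ):ℝ) ≤ (((j + d₀) - i₁ : ℕ):ℝ) := Nat.cast_le.mpr (by omega)
      have hmul : lam * (((j + d₀) - i₁ : ℕ):ℝ) ≤ lam * (lam * (2*K + C)) :=
        mul_le_mul_of_nonneg_left hgap hlam0.le
      have hmul2 : lam * ((j - i₁:ℕ):ℝ) ≤ lam * (((j + d₀) - i₁ : ℕ):ℝ) :=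
        mul_le_mul_of_nonneg_left hnle hlam0.le
      rw [hD0]
      linarith [htrR, hup, hq1, hmul, hmul2]
    · -- q z itself equals π
      have : u j = π := by
        by_contra hne
        exact hzS ((hSv (u j)).mpr ⟨by rw [hu]; exact eπ1, by rw [hu]; exact eπ2, hne⟩)
      rw [this]
      simpa [SimpleGraph.dist_self] using hD00
  -- final distance transfer
  have final : ∀ w : V, (T.dist (q (p.getVert j)) (q w) : ℝ) ≤ D0 + K →
      (Y.dist (p.getVert j) w : ℝ) ≤ lam * (D0 + K + C) + 1 := by
    intro w hw
    have hlo := hlower (p.getVert j) w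
    have h2 : (1/lam) * (Y.dist (p.getVert j) w : ℝ) ≤ D0 + K + C := by linarith
    have h3 : lam * ((1/lam) * (Y.dist (p.getVert j) w : ℝ)) ≤ lam * (D0 + K + C) :=
      mul_le_mul_of_nonneg_left h2 hlam0.le
    have h4 : lam * ((1/lam) * (Y.dist (p.getVert j) w : ℝ)) = (Y.dist (p.getVert j) w : ℝ) := by
      field_simp
    rw [h4] at h3
    linarith
  -- Step B : walk α must pass near π
  by_cases hexB : ∃ i, ¬ (T.dist (q (α.getVert i)) π + T.dist π (q y) =
      T.dist (q (α.getVert i)) (q y))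
  · set i0 := Nat.find hexB with hi0def
    have hi0 := Nat.find_spec hexB
    rw [← hi0def] at hi0
    have h0 : T.dist (q (α.getVert 0)) π + T.dist π (q y) = T.dist (q (α.getVert 0)) (q y) := by
      rw [α.getVert_zero]; exact hπbtw
    have hi0pos : i0 ≠ 0 := by
      intro h
      rw [h] at hi0
      exact hi0 h0
    have hprev : T.dist (q (α.getVert (i0-1))) π + T.dist π (q y) =
        T.dist (q (α.getVert (i0-1))) (q y) :=
      not_not.mp (Nat.find_min hexB (by omega : i0 - 1 < i0))
    have hi0M : i0 ≤ α.length := by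
      by_contra hgt
      push_neg at hgt
      have hMst := not_not.mp (Nat.find_min hexB hgt)
      have hcl : α.getVert i0 = y := α.getVert_of_length_le (by omega)
      rw [α.getVert_length] at hMst
      rw [hcl] at hi0
      exact hi0 hMst
    rcases tree_btw_cases hT (q (α.getVert (i0-1))) (q (α.getVert i0)) (q y) π hprev
      with hbt | hbt
    · have hjmp : (T.dist (q (α.getVert (i0-1))) (q (α.getVert ((i0-1)+1))) : ℝ) ≤ K :=
        jump α (i0-1)
      rw [show (i0-1)+1 = i0 by omega] at hjmp
      have hcur : (T.dist (q (α.getVert i0)) π : ℝ) ≤ K := by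
        have h1 : T.dist (q (α.getVert i0)) π ≤
            T.dist (q (α.getVert (i0-1))) (q (α.getVert i0)) := by
          have cc : T.dist π (q (α.getVert i0)) = T.dist (q (α.getVert i0)) π :=
            SimpleGraph.dist_comm
          omega
        exact le_trans (Nat.cast_le.mpr h1) hjmp
      refine ⟨α.getVert i0, Walk.mem_support_iff_exists_getVert.mpr ⟨i0, rfl, hi0M⟩, ?_⟩
      apply final
      have htr := hTc.dist_triangle (u := q (p.getVert j)) (v := π) (w := q (α.getVert i0))
      have cc : T.dist π (q (α.getVert i0)) = T.dist (q (α.getVert i0)) π :=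
        SimpleGraph.dist_comm
      have htrR : (T.dist (q (p.getVert j)) (q (α.getVert i0)) : ℝ) ≤
          (T.dist (q (p.getVert j)) π : ℝ) + (T.dist (q (α.getVert i0)) π : ℝ) := by
        rw [← cc]; exact_mod_cast htr
      rw [← hu] at htrR ⊢
      linarith [hDz]
    · exact absurd hbt hi0
  · push_neg at hexB
    have hM := hexB α.length
    rw [α.getVert_length] at hM
    have hd0 : T.dist (q y) (q y) = 0 := SimpleGraph.dist_self
    have cc : T.dist (q y) π = T.dist π (q y) := SimpleGraph.dist_comm
    have hz0 : T.dist π (q y) = 0 := by omega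
    have hπy : π = q y := (hTc.dist_eq_zero_iff).mp hz0
    refine ⟨y, α.end_mem_support, ?_⟩
    apply final
    rw [← hπy, ← hu]
    linarith [hDz, hK0]
end

section
/- Let T be a simple graph that is a tree (connected and acyclic), with shortest-path metric d, and let ε > 0. Let Q be a set of vertices of T that is ε-coarsely connected: for any two vertices x, y ∈ Q there exist vertices x = x₀, x₁, …, xₙ = y, all in Q, with d(xᵢ, xᵢ₊₁) ≤ ε for all i = 0, …, n−1. Then Q is ε-quasi-convex: for any x, y ∈ Q, every geodesic walk from x to y (a walk whose length equals d(x,y)) has all of its vertices at distance at most ε from Q. -/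
/-- A set `S` of vertices of a graph `G` is `ε`-coarsely connected if any two of its
points can be joined by a chain in `S` with consecutive distances at most `ε`. -/
def SimpleGraph.CoarselyConnected {V : Type*} (G : SimpleGraph V) (ε : ℝ) (S : Set V) : Prop :=
  ∀ x ∈ S, ∀ y ∈ S, ∃ (n : ℕ) (c : ℕ → V),
    c 0 = x ∧ c n = y ∧ (∀ i ≤ n, c i ∈ S) ∧
    ∀ i < n, (G.dist (c i) (c (i + 1)) : ℝ) ≤ ε

/-- Splitting a walk at a vertex of its support bounds the sum of distances. -/
lemma dist_add_dist_le_length {V : Type*} {G : SimpleGraph V} {a y v : V}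
    (p : G.Walk a y) (hv : v ∈ p.support) :
    G.dist a v + G.dist v y ≤ p.length := by
  classical
  have hspec := p.take_spec hv
  calc G.dist a v + G.dist v y
      ≤ (p.takeUntil v hv).length + (p.dropUntil v hv).length :=
        Nat.add_le_add (SimpleGraph.dist_le _) (SimpleGraph.dist_le _)
    _ = ((p.takeUntil v hv).append (p.dropUntil v hv)).length :=
        (SimpleGraph.Walk.length_append _ _).symm
    _ = p.length := by rw [hspec]

/-- Key tree lemma: if `v` lies on the geodesic from `a` to `y`, then for any `b`,
`v` lies on the geodesic from `a` to `b` or on the geodesic from `b` to `y`. -/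
lemma tree_split {V : Type*} {T : SimpleGraph V} (hT : T.IsTree) (a y v b : V)
    (h : T.dist a y = T.dist a v + T.dist v y) :
    T.dist a b = T.dist a v + T.dist v b ∨ T.dist b y = T.dist b v + T.dist v y := by
  classical
  have hconn := hT.isConnected
  obtain ⟨pav, hpav⟩ := hconn.exists_walk_length_eq_dist a v
  obtain ⟨pvy, hpvy⟩ := hconn.exists_walk_length_eq_dist v y
  obtain ⟨pab, hpab⟩ := hconn.exists_walk_length_eq_dist a b
  obtain ⟨pby, hpby⟩ := hconn.exists_walk_length_eq_dist b y
  set P : T.Walk a y := pav.append pvy with hP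
  have hPlen : P.length = T.dist a y := by
    rw [hP, SimpleGraph.Walk.length_append, hpav, hpvy, h]
  have hPpath : P.IsPath := P.isPath_of_length_eq_dist hPlen
  have hvP : v ∈ P.support := by
    rw [hP, SimpleGraph.Walk.mem_support_append_iff]
    exact Or.inl pav.end_mem_support
  set Q : T.Walk a y := pab.append pby with hQ
  have hQpath : Q.bypass.IsPath := Q.bypass_isPath
  obtain ⟨w, -, huniq⟩ := hT.existsUnique_path a y
  have heq : Q.bypass = P := (huniq _ hQpath).trans (huniq _ hPpath).symm
  have hvQ : v ∈ Q.support := Q.support_bypass_subset (heq ▸ hvP)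
  rw [hQ, SimpleGraph.Walk.mem_support_append_iff] at hvQ
  rcases hvQ with hvab | hvby
  · left
    have h1 := dist_add_dist_le_length pab hvab
    rw [hpab] at h1
    exact le_antisymm (hconn.dist_triangle) h1
  · right
    have h1 := dist_add_dist_le_length pby hvby
    rw [hpby] at h1
    have h2 : T.dist b y ≤ T.dist b v + T.dist v y := hconn.dist_triangle
    exact le_antisymm h2 h1

/-- In a tree, an `ε`-coarsely connected set of vertices is
`ε`-quasi-convex. -/
theorem coarselyConnected_quasiconvex_in_tree
    {V : Type*} (T : SimpleGraph V) (hT : T.IsTree)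
    (ε : ℝ) (hε : 0 < ε)
    (Q : Set V) (hQ : T.CoarselyConnected ε Q) :
    ∀ x ∈ Q, ∀ y ∈ Q, ∀ p : T.Walk x y, p.length = T.dist x y →
      ∀ v ∈ p.support, ∃ s ∈ Q, (T.dist v s : ℝ) ≤ ε := by
  classical
  intro x hx y hy p hp v hv
  have hconn := hT.isConnected
  have hxvy : T.dist x y = T.dist x v + T.dist v y := by
    have h1 : T.dist x v + T.dist v y ≤ p.length := dist_add_dist_le_length p hv
    rw [hp] at h1
    exact le_antisymm hconn.dist_triangle h1
  obtain ⟨n, c, hc0, hcn, hcQ, hcd⟩ := hQ x hx y hy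
  by_cases hall : ∀ i ≤ n, T.dist (c i) y = T.dist (c i) v + T.dist v y
  · -- then v = y
    have hn := hall n le_rfl
    rw [hcn, SimpleGraph.dist_self] at hn
    have hvy : T.dist v y = 0 := by omega
    have : v = y := (hconn.dist_eq_zero_iff).mp hvy
    exact ⟨y, hy, by simp [this, SimpleGraph.dist_self, le_of_lt hε]⟩
  · push_neg at hall
    have hex : ∃ j, j ≤ n ∧ ¬ (T.dist (c j) y = T.dist (c j) v + T.dist v y) := hall
    obtain ⟨hjn, hjbad⟩ := Nat.find_spec hex
    set j := Nat.find hex with hj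
    have hj0 : j ≠ 0 := by
      intro h0
      rw [h0, hc0] at hjbad
      exact hjbad hxvy
    have hjm1 : j - 1 < j := Nat.sub_lt (Nat.pos_of_ne_zero hj0) one_pos
    have hgood : T.dist (c (j - 1)) y = T.dist (c (j - 1)) v + T.dist v y := by
      by_contra hbad
      exact Nat.find_min hex hjm1 ⟨le_trans (le_of_lt hjm1) hjn, hbad⟩
    have hsucc : j - 1 + 1 = j := Nat.succ_pred_eq_of_pos (Nat.pos_of_ne_zero hj0)
    rcases tree_split hT (c (j - 1)) y v (c j) hgood with hcase | hcase
    · refine ⟨c j, hcQ j hjn, ?_⟩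
      have hle : T.dist v (c j) ≤ T.dist (c (j - 1)) (c j) := by omega
      have hd := hcd (j - 1) (by omega)
      rw [hsucc] at hd
      calc (T.dist v (c j) : ℝ) ≤ (T.dist (c (j - 1)) (c j) : ℝ) := by exact_mod_cast hle
        _ ≤ ε := hd
    · exact absurd hcase hjbad
end

section
/- Let Γ be a connected simple graph with shortest-path metric d_Γ which is a quasi-tree: there exist a simple graph T that is a tree (connected and acyclic) with shortest-path metric d_T, constants λ ≥ 1, C ≥ 0, and a map q from the vertices of T to the vertices of Γ such that (1/λ) d_T(a,b) − C ≤ d_Γ(q(a), q(b)) ≤ λ d_T(a,b) + C for all vertices a, b of T, and every vertex of Γ is at distance at most C from the image of q. Let S be a set of vertices of Γ that is ε-coarsely connected for some ε > 0. Then S is quasi-convex: there exists σ > 0 such that for any x, y ∈ S, every geodesic walk from x to y in Γ has all of its vertices at distance at most σ from S. -/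
namespace QTAux

open SimpleGraph Walk

variable {V : Type*} {G : SimpleGraph V}

lemma isPath_append {u v w : V} {p : G.Walk u v} {q : G.Walk v w}
    (hp : p.IsPath) (hq : q.IsPath)
    (h : ∀ z ∈ p.support, z ∈ q.support → z = v) : (p.append q).IsPath := by
  rw [Walk.isPath_def, Walk.support_append]
  refine List.Nodup.append hp.support_nodup (hq.support_nodup.tail) ?_
  intro z hzp hzq
  have hzq' : z ∈ q.support := List.mem_of_mem_tail hzq
  have hz : z = v := h z hzp hzq'
  subst hz
  have hnd := hq.support_nodup
  rw [Walk.support_eq_cons] at hnd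
  exact (List.nodup_cons.mp hnd).1 hzq

lemma exists_crossing {b c : V} (p : G.Walk b c) (L : List V) (hL : c ∈ L) :
    ∃ (m : V) (p1 : G.Walk b m) (p2 : G.Walk m c), p1.append p2 = p ∧ m ∈ L ∧
      ∀ z ∈ p1.support, z ∈ L → z = m := by
  induction p with
  | nil => exact ⟨_, Walk.nil, Walk.nil, rfl, hL, by intro z hz _; simpa using hz⟩
  | @cons u v' w h p' ih =>
    by_cases hb : u ∈ L
    · exact ⟨u, Walk.nil, Walk.cons h p', rfl, hb, by intro z hz _; simpa using hz⟩
    · obtain ⟨m, p1, p2, happ, hm, hmin⟩ := ih hL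
      refine ⟨m, Walk.cons h p1, p2, by rw [Walk.cons_append, happ], hm, ?_⟩
      intro z hz hzL
      rw [Walk.support_cons] at hz
      rcases List.mem_cons.mp hz with rfl | hz'
      · exact absurd hzL hb
      · exact hmin z hz' hzL

variable (hG : G.IsTree)
include hG

lemma path_unique {u v : V} {p q : G.Walk u v} (hp : p.IsPath) (hq : q.IsPath) : p = q :=
  (hG.existsUnique_path u v).unique hp hq

/-- The canonical geodesic path between two vertices of a tree. -/
noncomputable def tpath (u v : V) : G.Walk u v :=
  (hG.isConnected.exists_path_of_dist u v).choose

lemma tpath_isPath (u v : V) : (tpath hG u v).IsPath :=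
  (hG.isConnected.exists_path_of_dist u v).choose_spec.1

lemma length_tpath (u v : V) : (tpath hG u v).length = G.dist u v :=
  (hG.isConnected.exists_path_of_dist u v).choose_spec.2

lemma tpath_support_subset {u v : V} (w : G.Walk u v) :
    (tpath hG u v).support ⊆ w.support := by
  classical
  have h : w.bypass = tpath hG u v := path_unique hG w.bypass_isPath (tpath_isPath hG u v)
  rw [← h]
  exact w.support_bypass_subset

lemma dist_add_of_mem_tpath {u v m : V} (hm : m ∈ (tpath hG u v).support) :
    G.dist u m + G.dist m v = G.dist u v := by
  classical
  have h1 := SimpleGraph.dist_le ((tpath hG u v).takeUntil m hm)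
  have h2 := SimpleGraph.dist_le ((tpath hG u v).dropUntil m hm)
  have h3 : ((tpath hG u v).takeUntil m hm).length
      + ((tpath hG u v).dropUntil m hm).length = G.dist u v := by
    rw [← length_tpath hG u v, ← Walk.length_append, Walk.take_spec]
  have h4 := hG.isConnected.dist_triangle (u := u) (v := m) (w := v)
  omega

lemma mem_tpath_of_dist_add {u v m : V} (h : G.dist u m + G.dist m v = G.dist u v) :
    m ∈ (tpath hG u v).support := by
  classical
  obtain ⟨w1, hw1⟩ := hG.isConnected.exists_walk_length_eq_dist u m
  obtain ⟨w2, hw2⟩ := hG.isConnected.exists_walk_length_eq_dist m v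
  have hlen : (w1.append w2).length = G.dist u v := by
    rw [Walk.length_append, hw1, hw2, h]
  have hb : (w1.append w2).bypass = w1.append w2 := by
    apply Walk.bypass_eq_self_of_length_le
    calc (w1.append w2).length = G.dist u v := hlen
    _ ≤ (w1.append w2).bypass.length := SimpleGraph.dist_le _
  have hpath : (w1.append w2).IsPath := hb ▸ (w1.append w2).bypass_isPath
  have heq : w1.append w2 = tpath hG u v := path_unique hG hpath (tpath_isPath hG u v)
  rw [← heq, Walk.mem_support_append_iff]
  exact Or.inl w1.end_mem_support

lemma mem_tpath_symm {u v m : V} (h : m ∈ (tpath hG u v).support) :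
    m ∈ (tpath hG v u).support := by
  have heq : (tpath hG u v).reverse = tpath hG v u :=
    path_unique hG (tpath_isPath hG u v).reverse (tpath_isPath hG v u)
  rw [← heq, Walk.support_reverse, List.mem_reverse]
  exact h

lemma mem_or_mem {u v w m : V} (h : m ∈ (tpath hG u v).support) :
    m ∈ (tpath hG u w).support ∨ m ∈ (tpath hG w v).support := by
  have hsub := tpath_support_subset hG ((tpath hG u w).append (tpath hG w v))
  have h2 := hsub h
  rwa [Walk.mem_support_append_iff] at h2

lemma exists_median (a b c : V) :
    ∃ m, m ∈ (tpath hG a b).support ∧ m ∈ (tpath hG a c).support ∧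
      m ∈ (tpath hG b c).support := by
  classical
  obtain ⟨m, p1, p2, happ, hm, hmin⟩ :=
    exists_crossing (tpath hG b c) (tpath hG a c).support (Walk.end_mem_support _)
  refine ⟨m, ?_, hm, ?_⟩
  · have hp1 : p1.IsPath := by
      have hbc := tpath_isPath hG b c
      rw [← happ] at hbc
      exact hbc.of_append_left
    have hq1 : ((tpath hG a c).takeUntil m hm).IsPath := (tpath_isPath hG a c).takeUntil hm
    have hW : (((tpath hG a c).takeUntil m hm).append p1.reverse).IsPath := by
      apply isPath_append hq1 hp1.reverse
      intro z hzq hzp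
      have hz1 : z ∈ p1.support := by rwa [Walk.support_reverse, List.mem_reverse] at hzp
      exact hmin z hz1 ((Walk.support_takeUntil_subset _ hm) hzq)
    have heq : ((tpath hG a c).takeUntil m hm).append p1.reverse = tpath hG a b :=
      path_unique hG hW (tpath_isPath hG a b)
    rw [← heq, Walk.mem_support_append_iff]
    exact Or.inl (Walk.end_mem_support _)
  · rw [← happ, Walk.mem_support_append_iff]
    exact Or.inl (Walk.end_mem_support _)

lemma four_point (a b c d : V) :
    G.dist a b + G.dist c d ≤ G.dist a c + G.dist b d ∨
    G.dist a b + G.dist c d ≤ G.dist a d + G.dist b c := by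
  obtain ⟨m, hab, hac, hbc⟩ := exists_median hG a b c
  have e1 := dist_add_of_mem_tpath hG hab
  have e2 := dist_add_of_mem_tpath hG hac
  have e3 := dist_add_of_mem_tpath hG hbc
  have ca : G.dist m a = G.dist a m := SimpleGraph.dist_comm
  have cb : G.dist m b = G.dist b m := SimpleGraph.dist_comm
  have cc : G.dist m c = G.dist c m := SimpleGraph.dist_comm
  have cd' : G.dist m d = G.dist d m := SimpleGraph.dist_comm
  by_cases hcd : m ∈ (tpath hG c d).support
  · have e4 := dist_add_of_mem_tpath hG hcd
    rcases mem_or_mem hG (w := d) (mem_tpath_symm hG hab) with hbd' | hda'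
    · left
      have e5 := dist_add_of_mem_tpath hG hbd'
      have cbd : G.dist b d = G.dist b d := rfl
      omega
    · right
      have e5 := dist_add_of_mem_tpath hG hda'
      have cda : G.dist d a = G.dist a d := SimpleGraph.dist_comm
      have cbc : G.dist c b = G.dist b c := SimpleGraph.dist_comm
      omega
  · have hda : m ∈ (tpath hG d a).support :=
      ((mem_or_mem hG (w := d) (mem_tpath_symm hG hac)).resolve_left hcd)
    have hdb : m ∈ (tpath hG d b).support :=
      ((mem_or_mem hG (w := d) (mem_tpath_symm hG hbc)).resolve_left hcd)
    have e4 := dist_add_of_mem_tpath hG hda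
    have e5 := dist_add_of_mem_tpath hG hdb
    have tri : G.dist c d ≤ G.dist c m + G.dist m d := hG.isConnected.dist_triangle
    left
    have cda : G.dist d a = G.dist a d := SimpleGraph.dist_comm
    have cdb : G.dist d b = G.dist b d := SimpleGraph.dist_comm
    omega

end QTAux

namespace QTAux2

open SimpleGraph Walk

variable {V : Type*} {G : SimpleGraph V}

lemma dist_getVert_le (hc : G.Connected) {x y : V} (p : G.Walk x y) (i : ℕ) :
    ∀ j, i ≤ j → j ≤ p.length → G.dist (p.getVert i) (p.getVert j) ≤ j - i := by
  intro j
  induction j with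
  | zero =>
    intro hij _
    have : i = 0 := Nat.le_zero.mp hij
    subst this
    simp
  | succ j ih =>
    intro hij hj
    rcases Nat.eq_or_lt_of_le hij with h | h
    · subst h
      simp
    · have hij' : i ≤ j := Nat.lt_succ_iff.mp h
      have h1 := ih hij' (by omega)
      have hadj : G.Adj (p.getVert j) (p.getVert (j + 1)) := p.adj_getVert_succ (by omega)
      have h2 : G.dist (p.getVert j) (p.getVert (j + 1)) ≤ 1 := by
        have := SimpleGraph.dist_le (Walk.cons hadj Walk.nil)
        simpa using this
      have htri := hc.dist_triangle (u := p.getVert i) (v := p.getVert j)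
        (w := p.getVert (j + 1))
      omega

lemma geodesic_coord (hc : G.Connected) {x y : V} (p : G.Walk x y)
    (hp : p.length = G.dist x y) {k : ℕ} (hk : k ≤ p.length) :
    G.dist x (p.getVert k) = k ∧ G.dist (p.getVert k) y = p.length - k := by
  have h1 : G.dist x (p.getVert k) ≤ k := by
    have := dist_getVert_le hc p 0 k (Nat.zero_le k) hk
    simpa using this
  have h2 : G.dist (p.getVert k) y ≤ p.length - k := by
    have := dist_getVert_le hc p k p.length hk le_rfl
    simpa using this
  have h3 := hc.dist_triangle (u := x) (v := p.getVert k) (w := y)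
  omega

lemma geodesic_segment (hc : G.Connected) {x y : V} (p : G.Walk x y)
    (hp : p.length = G.dist x y) {i j : ℕ} (hij : i ≤ j) (hj : j ≤ p.length) :
    G.dist (p.getVert i) (p.getVert j) = j - i := by
  have h1 := dist_getVert_le hc p i j hij hj
  have hxi := (geodesic_coord hc p hp (le_trans hij hj)).1
  have hxj := (geodesic_coord hc p hp hj).1
  have htri := hc.dist_triangle (u := x) (v := p.getVert i) (w := p.getVert j)
  omega

end QTAux2

/-- In a quasi-tree, every coarsely connected set of vertices is
quasi-convex. -/
theorem coarselyConnected_quasiconvex_in_quasiTree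
    {V V' : Type*} (Γ : SimpleGraph V) (hΓconn : Γ.Connected)
    (T : SimpleGraph V') (hT : T.IsTree)
    (lam C : ℝ) (hlam : 1 ≤ lam) (hC : 0 ≤ C)
    (q : V' → V)
    (hlower : ∀ a b : V',
      (1 / lam) * (T.dist a b : ℝ) - C ≤ (Γ.dist (q a) (q b) : ℝ))
    (hupper : ∀ a b : V',
      (Γ.dist (q a) (q b) : ℝ) ≤ lam * (T.dist a b : ℝ) + C)
    (hcobounded : ∀ v : V, ∃ a : V', (Γ.dist v (q a) : ℝ) ≤ C)
    (ε : ℝ) (hε : 0 < ε)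
    (S : Set V) (hS : Γ.CoarselyConnected ε S) :
    ∃ σ : ℝ, 0 < σ ∧
      ∀ x ∈ S, ∀ y ∈ S, ∀ p : Γ.Walk x y, p.length = Γ.dist x y →
        ∀ v ∈ p.support, ∃ s ∈ S, (Γ.dist v s : ℝ) ≤ σ := by
  classical
  choose f hf using hcobounded
  have hlam0 : (0 : ℝ) < lam := lt_of_lt_of_le one_pos hlam
  set k : ℝ := lam * (1 + 3 * C) with hk_def
  set kap : ℝ := lam * (ε + 3 * C) with hkap_def
  set R : ℝ := k + lam * (2 * lam * k + 6 * C) with hR_def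
  have hk0 : 0 ≤ k := by rw [hk_def]; apply mul_nonneg hlam0.le; linarith
  have hkap0 : 0 ≤ kap := by rw [hkap_def]; apply mul_nonneg hlam0.le; linarith
  have hlamk : 0 ≤ lam * k := mul_nonneg hlam0.le hk0
  have hRaux : 0 ≤ lam * (2 * lam * k + 6 * C) :=
    mul_nonneg hlam0.le (by nlinarith [hlamk])
  have hR0 : 0 ≤ R := by rw [hR_def]; linarith
  refine ⟨lam * (R + kap) + 3 * C + 1, ?_, ?_⟩
  · have : 0 ≤ lam * (R + kap) := mul_nonneg hlam0.le (by linarith)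
    linarith
  intro x hx y hy p hp v hv
  obtain ⟨n, c, hc0, hcn, hcS, hcstep⟩ := hS x hx y hy
  obtain ⟨mm, hvm, hmmL⟩ := SimpleGraph.Walk.mem_support_iff_exists_getVert.mp hv
  -- basic metric facts
  have gtri : ∀ u₁ u₂ u₃ : V, (Γ.dist u₁ u₃ : ℝ) ≤ Γ.dist u₁ u₂ + Γ.dist u₂ u₃ := by
    intro u₁ u₂ u₃; exact_mod_cast hΓconn.dist_triangle
  have gcomm : ∀ u w : V, (Γ.dist u w : ℝ) = Γ.dist w u := by
    intro u w; exact_mod_cast SimpleGraph.dist_comm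
  have ttri : ∀ z₁ z₂ z₃ : V', (T.dist z₁ z₃ : ℝ) ≤ T.dist z₁ z₂ + T.dist z₂ z₃ := by
    intro z₁ z₂ z₃; exact_mod_cast hT.isConnected.dist_triangle
  have tcomm : ∀ z w : V', (T.dist z w : ℝ) = T.dist w z := by
    intro z w; exact_mod_cast SimpleGraph.dist_comm
  -- comparison of the two metrics through f
  have hqf : ∀ u w : V, (Γ.dist (q (f u)) (q (f w)) : ℝ) ≤ Γ.dist u w + 2 * C := by
    intro u w
    have t1 := gtri (q (f u)) u (q (f w))
    have t2 := gtri u w (q (f w))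
    have c1 := gcomm (q (f u)) u
    linarith [hf u, hf w]
  have hLIFT : ∀ u w : V, (T.dist (f u) (f w) : ℝ) ≤ lam * ((Γ.dist u w : ℝ) + 3 * C) := by
    intro u w
    have h1 := hlower (f u) (f w)
    have h2 := hqf u w
    have h3 : (1 / lam) * (T.dist (f u) (f w) : ℝ) ≤ (Γ.dist u w : ℝ) + 3 * C := by linarith
    have h4 : (T.dist (f u) (f w) : ℝ) = lam * ((1 / lam) * (T.dist (f u) (f w) : ℝ)) := by
      field_simp
    rw [h4]
    exact mul_le_mul_of_nonneg_left h3 hlam0.le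
  have hPROJ : ∀ u w : V, (Γ.dist u w : ℝ) ≤ lam * (T.dist (f u) (f w) : ℝ) + 3 * C := by
    intro u w
    have t1 := gtri u (q (f u)) w
    have t2 := gtri (q (f u)) (q (f w)) w
    have c1 := gcomm (q (f w)) w
    linarith [hf u, hf w, hupper (f u) (f w)]
  -- Gromov-product coordinates on the tree relative to (f x, f y)
  set tt : V' → ℝ := fun z =>
    ((T.dist (f x) z : ℝ) + (T.dist (f x) (f y) : ℝ) - (T.dist z (f y) : ℝ)) / 2 with htt
  set rr : V' → ℝ := fun z =>
    ((T.dist (f x) z : ℝ) + (T.dist z (f y) : ℝ) - (T.dist (f x) (f y) : ℝ)) / 2 with hrr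
  have FPR : ∀ z₁ z₂ z₃ z₄ : V',
      (T.dist z₁ z₂ : ℝ) + (T.dist z₃ z₄ : ℝ) ≤ (T.dist z₁ z₃ : ℝ) + (T.dist z₂ z₄ : ℝ) ∨
      (T.dist z₁ z₂ : ℝ) + (T.dist z₃ z₄ : ℝ) ≤ (T.dist z₁ z₄ : ℝ) + (T.dist z₂ z₃ : ℝ) := by
    intro z₁ z₂ z₃ z₄
    rcases QTAux.four_point hT z₁ z₂ z₃ z₄ with h | h
    · left; exact_mod_cast h
    · right; exact_mod_cast h
  have hrr0 : ∀ z, 0 ≤ rr z := by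
    intro z
    have := ttri (f x) z (f y)
    simp only [hrr]
    linarith
  have htt0 : ∀ z, 0 ≤ tt z := by
    intro z
    have h1 := ttri z (f x) (f y)
    have h2 := tcomm z (f x)
    simp only [htt]
    linarith
  have httD : ∀ z, tt z ≤ (T.dist (f x) (f y) : ℝ) := by
    intro z
    have h1 := ttri (f x) (f y) z
    have h2 := tcomm (f y) z
    simp only [htt]
    linarith
  have htA : tt (f x) = 0 := by
    simp only [htt, SimpleGraph.dist_self, Nat.cast_zero]
    ring
  have hrA : rr (f x) = 0 := by
    simp only [hrr, SimpleGraph.dist_self, Nat.cast_zero]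
    ring
  have htB : tt (f y) = (T.dist (f x) (f y) : ℝ) := by
    simp only [htt, SimpleGraph.dist_self, Nat.cast_zero]
    ring
  have hrB : rr (f y) = 0 := by
    simp only [hrr, SimpleGraph.dist_self, Nat.cast_zero]
    ring
  have hrlip : ∀ z z', rr z ≤ rr z' + (T.dist z' z : ℝ) := by
    intro z z'
    have h1 := ttri (f x) z' z
    have h2 := ttri z z' (f y)
    have h3 := tcomm z z'
    simp only [hrr]
    linarith
  have hG1 : ∀ z z', tt z < tt z' →
      rr z + rr z' + (tt z' - tt z) ≤ (T.dist z z' : ℝ) := by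
    intro z z' hlt
    simp only [htt] at hlt
    rcases FPR (f x) z' z (f y) with h | h
    · exfalso; linarith
    · have h3 := tcomm z' z
      simp only [htt, hrr]
      linarith
  have hG2 : ∀ z z', (T.dist z z' : ℝ) ≤ rr z + rr z' + |tt z - tt z'| := by
    intro z z'
    rcases FPR (f x) (f y) z z' with h | h
    · have habs := le_abs_self (tt z - tt z')
      have h3 := tcomm (f y) z'
      simp only [htt, hrr] at habs ⊢
      linarith
    · have habs := le_abs_self (tt z' - tt z)
      have hcomm := abs_sub_comm (tt z) (tt z')
      have h3 := tcomm (f y) z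
      rw [hcomm]
      simp only [htt, hrr] at habs ⊢
      linarith
  -- steps of the chain and of the geodesic, measured in the tree
  have hastep : ∀ i < n, (T.dist (f (c i)) (f (c (i + 1))) : ℝ) ≤ kap := by
    intro i hi
    have h1 := hLIFT (c i) (c (i + 1))
    have h2 := hcstep i hi
    rw [hkap_def]
    calc (T.dist (f (c i)) (f (c (i + 1))) : ℝ)
        ≤ lam * ((Γ.dist (c i) (c (i + 1)) : ℝ) + 3 * C) := h1
      _ ≤ lam * (ε + 3 * C) := mul_le_mul_of_nonneg_left (by linarith) hlam0.le
  have hseg : ∀ i j : ℕ, i ≤ j → j ≤ p.length →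
      (Γ.dist (p.getVert i) (p.getVert j) : ℝ) = (j : ℝ) - (i : ℝ) := by
    intro i j hij hj
    have h := QTAux2.geodesic_segment hΓconn p hp hij hj
    rw [h, Nat.cast_sub hij]
  have hbstep : ∀ j : ℕ, j < p.length →
      (T.dist (f (p.getVert j)) (f (p.getVert (j + 1))) : ℝ) ≤ k := by
    intro j hj
    have h1 := hLIFT (p.getVert j) (p.getVert (j + 1))
    have h2 : (Γ.dist (p.getVert j) (p.getVert (j + 1)) : ℝ) = 1 := by
      rw [hseg j (j + 1) (by omega) (by omega)]
      push_cast
      ring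
    rw [h2] at h1
    rw [hk_def]
    exact h1
  -- THE MORSE-TYPE CLAIM: points on the geodesic are close to the tree geodesic
  have morse : ∀ m' : ℕ, m' ≤ p.length → rr (f (p.getVert m')) ≤ R := by
    intro m' hm'
    by_cases hbig : rr (f (p.getVert m')) ≤ k
    · rw [hR_def]; linarith
    push_neg at hbig
    -- largest index ≤ m' where rr ≤ k
    set i0 := Nat.findGreatest (fun i => rr (f (p.getVert i)) ≤ k) m' with hi0def
    have hP10 : rr (f (p.getVert 0)) ≤ k := by
      rw [SimpleGraph.Walk.getVert_zero, hrA]; exact hk0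
    have hi0m : i0 ≤ m' := by rw [hi0def]; exact Nat.findGreatest_le m'
    have hi0P : rr (f (p.getVert i0)) ≤ k := by
      rw [hi0def]
      exact Nat.findGreatest_spec (P := fun i => rr (f (p.getVert i)) ≤ k) (Nat.zero_le m') hP10
    have hi0max : ∀ s, i0 < s → s ≤ m' → k < rr (f (p.getVert s)) := by
      intro s h1 h2
      have := Nat.findGreatest_is_greatest (P := fun i => rr (f (p.getVert i)) ≤ k)
        (by rw [← hi0def]; exact h1) h2
      exact not_le.mp this
    have hi0lt : i0 < m' := by
      rcases Nat.eq_or_lt_of_le hi0m with h | h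
      · exfalso; rw [h] at hi0P; linarith
      · exact h
    -- smallest index ≥ m' where rr ≤ k
    have hexJ : ∃ dd : ℕ, m' + dd ≤ p.length ∧ rr (f (p.getVert (m' + dd))) ≤ k := by
      refine ⟨p.length - m', by omega, ?_⟩
      rw [show m' + (p.length - m') = p.length from by omega, SimpleGraph.Walk.getVert_length, hrB]
      exact hk0
    set d0 := Nat.find hexJ with hd0def
    obtain ⟨hj0L, hj0P⟩ := Nat.find_spec hexJ
    rw [← hd0def] at hj0L hj0P
    have hj0min : ∀ s, m' ≤ s → s < m' + d0 → k < rr (f (p.getVert s)) := by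
      intro s h1 h2
      have hmin := Nat.find_min hexJ (m := s - m') (by rw [← hd0def]; omega)
      rw [show m' + (s - m') = s from by omega] at hmin
      by_contra hcon
      push_neg at hcon
      exact hmin ⟨by omega, hcon⟩
    have hmltj : m' < m' + d0 := by
      rcases Nat.eq_zero_or_pos d0 with h | h
      · exfalso; rw [h, Nat.add_zero] at hj0P; linarith
      · omega
    -- between i0 and m'+d0 the coordinate tt is constant
    have hstep_eq : ∀ s, i0 ≤ s → s + 1 ≤ m' + d0 →
        tt (f (p.getVert (s + 1))) = tt (f (p.getVert s)) := by
      intro s hs1 hs2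
      by_contra hne
      have hsL : s < p.length := by omega
      have hone : k < rr (f (p.getVert s)) ∨ k < rr (f (p.getVert (s + 1))) := by
        rcases Nat.eq_or_lt_of_le hs1 with h | h
        · right
          rcases Nat.lt_or_ge (s + 1) (m' + 1) with h2 | h2
          · exact hi0max (s + 1) (by omega) (by omega)
          · exact hj0min (s + 1) (by omega) (by omega)
        · left
          rcases Nat.lt_or_ge s (m' + 1) with h2 | h2
          · exact hi0max s h (by omega)
          · exact hj0min s (by omega) (by omega)
      have hstepb := hbstep s hsL
      have h0s := hrr0 (f (p.getVert s))
      have h0s1 := hrr0 (f (p.getVert (s + 1)))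
      rcases lt_trichotomy (tt (f (p.getVert s))) (tt (f (p.getVert (s + 1)))) with hlt | heq | hlt
      · have := hG1 _ _ hlt
        rcases hone with h | h <;> linarith
      · exact hne heq.symm
      · have := hG1 _ _ hlt
        have hcmm := tcomm (f (p.getVert (s + 1))) (f (p.getVert s))
        rcases hone with h | h <;> linarith
    have hconst : ∀ s, i0 ≤ s → s ≤ m' + d0 →
        tt (f (p.getVert s)) = tt (f (p.getVert i0)) := by
      intro s
      induction s with
      | zero =>
        intro h1 _
        have : i0 = 0 := Nat.le_zero.mp h1
        rw [this]
      | succ s ih =>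
        intro h1 h2
        rcases Nat.eq_or_lt_of_le h1 with h | h
        · rw [← h]
        · have hi0s : i0 ≤ s := by omega
          rw [hstep_eq s hi0s h2, ih hi0s (by omega)]
    have htij : tt (f (p.getVert (m' + d0))) = tt (f (p.getVert i0)) :=
      hconst (m' + d0) (by omega) le_rfl
    have h2k : (T.dist (f (p.getVert i0)) (f (p.getVert (m' + d0))) : ℝ) ≤ 2 * k := by
      have h := hG2 (f (p.getVert i0)) (f (p.getVert (m' + d0)))
      rw [htij, sub_self, abs_zero] at h
      linarith
    have hji : (↑(m' + d0) : ℝ) - (i0 : ℝ) ≤ lam * (2 * k) + 3 * C := by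
      have h1 := hPROJ (p.getVert i0) (p.getVert (m' + d0))
      rw [hseg i0 (m' + d0) (by omega) hj0L] at h1
      have h2 := mul_le_mul_of_nonneg_left h2k hlam0.le
      linarith
    have hfin1 := hLIFT (p.getVert i0) (p.getVert m')
    rw [hseg i0 m' hi0lt.le hm'] at hfin1
    have hmmi : (m' : ℝ) - (i0 : ℝ) ≤ lam * (2 * k) + 3 * C := by
      have hle : (m' : ℝ) ≤ (↑(m' + d0) : ℝ) := by exact_mod_cast Nat.le_add_right m' d0
      linarith
    have hfin2 : (T.dist (f (p.getVert i0)) (f (p.getVert m')) : ℝ)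
        ≤ lam * (2 * lam * k + 6 * C) := by
      refine le_trans hfin1 (mul_le_mul_of_nonneg_left ?_ hlam0.le)
      nlinarith [mul_le_mul_of_nonneg_left hji hlam0.le]
    have hlip := hrlip (f (p.getVert m')) (f (p.getVert i0))
    rw [hR_def]
    linarith
  -- THE CHAIN CLAIM: every coordinate value in [0, D] is nearly achieved by the chain
  have chain : ∀ τ : ℝ, 0 ≤ τ → τ ≤ (T.dist (f x) (f y) : ℝ) →
      ∃ i ≤ n, rr (f (c i)) + |tt (f (c i)) - τ| ≤ kap := by
    intro τ hτ0 hτD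
    by_cases hex : ∃ i, i ≤ n ∧ tt (f (c i)) < τ
    · obtain ⟨iw, hiwn, hiw⟩ := hex
      set i1 := Nat.findGreatest (fun i => tt (f (c i)) < τ) n with hi1def
      have hi1P : tt (f (c i1)) < τ := by
        rw [hi1def]
        exact Nat.findGreatest_spec (P := fun i => tt (f (c i)) < τ) hiwn hiw
      have hi1n : i1 ≤ n := by rw [hi1def]; exact Nat.findGreatest_le n
      have hi1lt : i1 < n := by
        have hne : i1 ≠ n := by
          intro h
          rw [h, hcn, htB] at hi1P
          linarith
        omega
      have hnext : τ ≤ tt (f (c (i1 + 1))) := by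
        have h := Nat.findGreatest_is_greatest (P := fun i => tt (f (c i)) < τ) (k := i1 + 1)
          (by rw [← hi1def]; omega) (by omega)
        exact not_lt.mp h
      have hstep := hastep i1 hi1lt
      have hlt : tt (f (c i1)) < tt (f (c (i1 + 1))) := lt_of_lt_of_le hi1P hnext
      have hg := hG1 _ _ hlt
      refine ⟨i1, hi1n, ?_⟩
      rw [abs_sub_comm, abs_of_nonneg (by linarith)]
      linarith [hrr0 (f (c (i1 + 1)))]
    · push_neg at hex
      have h0 := hex 0 (Nat.zero_le n)
      rw [hc0, htA] at h0
      have hτ : τ = 0 := le_antisymm h0 hτ0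
      refine ⟨0, Nat.zero_le n, ?_⟩
      rw [hc0, hτ, hrA, htA]
      simpa using hkap0
  -- ASSEMBLY
  have hmorse := morse mm hmmL
  obtain ⟨i, hin, hchain⟩ :=
    chain (tt (f (p.getVert mm))) (htt0 _) (httD _)
  refine ⟨c i, hcS i hin, ?_⟩
  rw [← hvm]
  have h1 := hPROJ (p.getVert mm) (c i)
  have h2 := hG2 (f (p.getVert mm)) (f (c i))
  have h3 := abs_sub_comm (tt (f (p.getVert mm))) (tt (f (c i)))
  have h4 : (T.dist (f (p.getVert mm)) (f (c i)) : ℝ) ≤ R + kap := by linarith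
  have h5 := mul_le_mul_of_nonneg_left h4 hlam0.le
  linarith
end

section
/- Let G be a group generated by a subset X ⊆ G such that the Cayley graph Γ(G, X) (vertex set G, with an edge between distinct g, h ∈ G whenever g⁻¹h ∈ X or h⁻¹g ∈ X), with shortest-path metric d_X, is a quasi-tree, i.e., quasi-isometric to a simplicial tree. Then every finitely generated subgroup H ≤ G is quasi-convex in Γ(G, X): there exists σ > 0 such that for any u, v ∈ H, every geodesic walk in Γ(G, X) from u to v has all of its vertices at distance at most σ from H. -/
/-- The Cayley graph of a group `G` with respect to a subset `X`: vertices are the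
elements of `G`, and distinct `g`, `h` are adjacent when `g⁻¹h ∈ X` or `h⁻¹g ∈ X`. -/
def cayleyGraph (G : Type*) [Group G] (X : Set G) : SimpleGraph G where
  Adj g h := g ≠ h ∧ (g⁻¹ * h ∈ X ∨ h⁻¹ * g ∈ X)
  symm := by
    constructor
    intro g h ⟨hne, hor⟩
    exact ⟨hne.symm, hor.symm⟩
  loopless := by
    constructor
    intro g ⟨hne, _⟩
    exact hne rfl

/-- A connected simple graph is a quasi-tree if its vertex set with the shortest-path
metric is quasi-isometric to (the vertex set of) a simplicial tree. -/
def SimpleGraph.IsQuasiTree {V : Type*} (G : SimpleGraph V) : Prop :=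
  G.Connected ∧
  ∃ (V' : Type) (T : SimpleGraph V'), T.IsTree ∧
    ∃ (q : V → V') (lam C : ℝ), 1 ≤ lam ∧ 0 ≤ C ∧
      (∀ a b : V,
        (1 / lam) * (G.dist a b : ℝ) - C ≤ (T.dist (q a) (q b) : ℝ) ∧
        (T.dist (q a) (q b) : ℝ) ≤ lam * (G.dist a b : ℝ) + C) ∧
      (∀ t : V', ∃ a : V, (T.dist t (q a) : ℝ) ≤ C)


/-!
Pull the tree metric back along the quasi-isometry `q` and use Gromov products, which in a tree
satisfy `min ((a|c)_w, (c|b)_w) ≤ (a|b)_w`. Seen from a point `z` of a geodesic from `u` to `v`,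
the product `(u|v)_z` is bounded: the geodesic has to pass the branch point of `u` and `v` by one
short jump, and that jump happens near `z`. A finitely generated subgroup is coarsely connected,
the partial products of a word for `u⁻¹ * v` forming a chain from `u` to `v` with bounded jumps. By
the ultrametric inequality some jump of this chain has Gromov product at `z` at most `(u|v)_z`,
so its starting point lies close to `z`.
-/

open Relation

lemma Nat.exists_lt_and_not_succ_of_not {p : ℕ → Prop} {n : ℕ} (h₀ : p 0) (hn : ¬ p n) :
    ∃ k < n, p k ∧ ¬ p (k + 1) := by
  induction n with
  | zero => exact absurd h₀ hn
  | succ n ih =>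
    by_cases h : p n
    · exact ⟨n, n.lt_succ_self, h, hn⟩
    · obtain ⟨k, hk, hpk⟩ := ih h
      exact ⟨k, hk.trans n.lt_succ_self, hpk⟩

namespace SimpleGraph

variable {V W : Type*}

noncomputable def gromovProduct (T : SimpleGraph V) (w a b : V) : ℝ :=
  ((T.dist w a : ℝ) + T.dist w b - T.dist a b) / 2

section GromovProduct

variable {T : SimpleGraph V}

lemma gromovProduct_comm (w a b : V) : T.gromovProduct w a b = T.gromovProduct w b a := by
  simp only [gromovProduct, dist_comm (u := a)]
  ring

@[simp]
lemma gromovProduct_self (w a : V) : T.gromovProduct w a a = T.dist w a := by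
  simp [gromovProduct]

@[simp]
lemma gromovProduct_self_left (w b : V) : T.gromovProduct w w b = 0 := by
  simp [gromovProduct]

lemma Connected.gromovProduct_le_dist (hT : T.Connected) (w a b : V) :
    T.gromovProduct w a b ≤ T.dist w a := by
  have h : T.dist w b ≤ T.dist w a + T.dist a b := hT.dist_triangle
  simp only [gromovProduct]
  linarith [(Nat.cast_le (α := ℝ)).mpr h, Nat.cast_add (R := ℝ) (T.dist w a) (T.dist a b)]

lemma Connected.dist_le_gromovProduct_add_dist (hT : T.Connected) (w a b : V) :
    (T.dist w a : ℝ) ≤ T.gromovProduct w a b + T.dist a b := by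
  have h : T.dist w a ≤ T.dist w b + T.dist b a := hT.dist_triangle
  rw [dist_comm (u := b)] at h
  simp only [gromovProduct]
  linarith [(Nat.cast_le (α := ℝ)).mpr h, Nat.cast_add (R := ℝ) (T.dist w b) (T.dist a b)]

end GromovProduct

lemma Walk.IsPath.reverse_append {G : SimpleGraph V} {w x y : V} {P : G.Walk w x} {Q : G.Walk w y}
    (hP : P.IsPath) (hQ : Q.IsPath) (h : ∀ c ∈ P.support, c ∈ Q.support → c = w) :
    (P.reverse.append Q).IsPath := by
  rw [Walk.isPath_def, Walk.support_append, List.nodup_append]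
  refine ⟨(Walk.isPath_def _).mp hP.reverse, hQ.support_nodup.sublist (List.tail_sublist _), ?_⟩
  rintro c hcP _ hcQ rfl
  rw [Walk.support_reverse, List.mem_reverse] at hcP
  obtain rfl := h c hcP (List.mem_of_mem_tail hcQ)
  have hnodup := hQ.support_nodup
  rw [← Q.cons_tail_support] at hnodup
  exact (List.nodup_cons.mp hnodup).1 hcQ

namespace IsTree

variable {T : SimpleGraph V}

lemma length_eq_dist_of_isPath (hT : T.IsTree) {u v : V} {p : T.Walk u v} (hp : p.IsPath) :
    p.length = T.dist u v := by
  obtain ⟨p', hp', hp'_len⟩ := (hT.connected u v).exists_path_of_dist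
  rw [← hp'_len, (hT.existsUnique_path u v).unique hp hp']

lemma dist_eq_add_of_mem_support (hT : T.IsTree) {u v m : V} {p : T.Walk u v} (hp : p.IsPath)
    (hm : m ∈ p.support) : T.dist u v = T.dist u m + T.dist m v := by
  classical
  rw [← hT.length_eq_dist_of_isPath hp, ← hT.length_eq_dist_of_isPath (hp.takeUntil hm),
    ← hT.length_eq_dist_of_isPath (hp.dropUntil hm), ← Walk.length_append, Walk.take_spec]

lemma snd_eq_of_mem_support (hT : T.IsTree) {w x y c : V} {P : T.Walk w x} {Q : T.Walk w y}
    (hP : P.IsPath) (hQ : Q.IsPath) (hcP : c ∈ P.support) (hcQ : c ∈ Q.support) (hc : c ≠ w) :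
    P.snd = Q.snd := by
  classical
  rw [← Walk.snd_takeUntil hc P hcP, ← Walk.snd_takeUntil hc Q hcQ,
    (hT.existsUnique_path w c).unique (hP.takeUntil hcP) (hQ.takeUntil hcQ)]

lemma exists_branch_point (hT : T.IsTree) {w x y : V} {P : T.Walk w x} {Q : T.Walk w y}
    (hP : P.IsPath) (hQ : Q.IsPath) :
    ∃ m ∈ P.support, m ∈ Q.support ∧ T.dist x m + T.dist m y ≤ T.dist x y := by
  induction P generalizing y with
  | nil => exact ⟨_, Walk.start_mem_support _, Q.start_mem_support, by simp⟩
  | @cons w b x hwb P ih =>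
    cases Q with
    | nil => exact ⟨w, Walk.start_mem_support _, Walk.start_mem_support _, by simp⟩
    | @cons _ b' y hwb' Q =>
      by_cases hbb' : b = b'
      · subst hbb'
        obtain ⟨m, hmP, hmQ, hm⟩ := ih hP.of_cons hQ.of_cons
        exact ⟨m, List.mem_cons_of_mem _ hmP, List.mem_cons_of_mem _ hmQ, hm⟩
      · refine ⟨w, Walk.start_mem_support _, Walk.start_mem_support _, le_of_eq ?_⟩
        have hpath := hP.reverse_append hQ fun c hcP hcQ => by
          by_contra hc
          simpa [hbb'] using hT.snd_eq_of_mem_support hP hQ hcP hcQ hc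
        rw [← hT.length_eq_dist_of_isPath hpath, Walk.length_append, Walk.length_reverse,
          dist_comm, ← hT.length_eq_dist_of_isPath hP, ← hT.length_eq_dist_of_isPath hQ]

lemma mem_support_of_dist_le (hT : T.IsTree) {w y z m₁ m₂ : V} {R : T.Walk w z} {Q : T.Walk w y}
    (hR : R.IsPath) (hQ : Q.IsPath) (hm₁ : m₁ ∈ R.support) (hm₂R : m₂ ∈ R.support)
    (hm₂Q : m₂ ∈ Q.support) (hle : T.dist w m₁ ≤ T.dist w m₂) : m₁ ∈ Q.support := by
  classical
  have hm₁_take : m₁ ∈ (R.takeUntil m₂ hm₂R).support := by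
    have h := hm₁
    rw [← R.take_spec hm₂R, Walk.mem_support_append_iff] at h
    rcases h with h | h
    · exact h
    have e₁ := hT.dist_eq_add_of_mem_support hR hm₁
    have e₂ := hT.dist_eq_add_of_mem_support hR hm₂R
    have e₃ := hT.dist_eq_add_of_mem_support (hR.dropUntil hm₂R) h
    obtain rfl : m₂ = m₁ := hT.connected.dist_eq_zero_iff.mp (by omega)
    exact Walk.end_mem_support _
  rw [(hT.existsUnique_path w m₂).unique (hR.takeUntil hm₂R) (hQ.takeUntil hm₂Q)] at hm₁_take
  exact Q.support_takeUntil_subset_support hm₂Q hm₁_take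

lemma dist_add_dist_le_of_mem_support (hT : T.IsTree) {w x y z m : V} {Q : T.Walk w y}
    {R : T.Walk w z} (hQ : Q.IsPath) (hR : R.IsPath) (hmQ : m ∈ Q.support) (hmR : m ∈ R.support)
    (hm : T.dist x m + T.dist m z ≤ T.dist x z) :
    T.dist x y + T.dist w z ≤ T.dist x z + T.dist w y := by
  have hy := hT.dist_eq_add_of_mem_support hQ hmQ
  have hz := hT.dist_eq_add_of_mem_support hR hmR
  have hxy : T.dist x y ≤ T.dist x m + T.dist m y := hT.connected.dist_triangle
  omega

/-- The four-point condition: trees are `0`-hyperbolic. -/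
theorem dist_add_dist_le_max (hT : T.IsTree) (w x y z : V) :
    T.dist x y + T.dist w z ≤ max (T.dist x z + T.dist w y) (T.dist z y + T.dist w x) := by
  obtain ⟨P, hP, -⟩ := hT.existsUnique_path w x
  obtain ⟨Q, hQ, -⟩ := hT.existsUnique_path w y
  obtain ⟨R, hR, -⟩ := hT.existsUnique_path w z
  obtain ⟨m₁, hm₁P, hm₁R, hm₁⟩ := hT.exists_branch_point hP hR
  obtain ⟨m₂, hm₂Q, hm₂R, hm₂⟩ := hT.exists_branch_point hQ hR
  rcases le_total (T.dist w m₁) (T.dist w m₂) with hle | hle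
  · have hm₁Q := hT.mem_support_of_dist_le hR hQ hm₁R hm₂R hm₂Q hle
    exact le_max_of_le_left (hT.dist_add_dist_le_of_mem_support hQ hR hm₁Q hm₁R hm₁)
  · have hm₂P := hT.mem_support_of_dist_le hR hP hm₂R hm₁R hm₁P hle
    have h := hT.dist_add_dist_le_of_mem_support hP hR hm₂P hm₂R hm₂
    rw [dist_comm (u := y), dist_comm (u := y)] at h
    exact le_max_of_le_right h

lemma min_gromovProduct_le (hT : T.IsTree) (w a b c : V) :
    min (T.gromovProduct w a c) (T.gromovProduct w c b) ≤ T.gromovProduct w a b := by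
  simp only [gromovProduct]
  rcases le_max_iff.mp (hT.dist_add_dist_le_max w a b c) with h | h
  · refine min_le_of_left_le ?_
    have h' : (T.dist a b : ℝ) + T.dist w c ≤ T.dist a c + T.dist w b := by exact_mod_cast h
    linarith
  · refine min_le_of_right_le ?_
    have h' : (T.dist a b : ℝ) + T.dist w c ≤ T.dist c b + T.dist w a := by exact_mod_cast h
    linarith

lemma exists_gromovProduct_le_of_reflTransGen (hT : T.IsTree) {α : Type*} {r : α → α → Prop}
    (hr : ∀ a, r a a) (f : α → V) (w : V) {u v : α} (h : ReflTransGen r u v) :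
    ∃ a b, r a b ∧ T.gromovProduct w (f a) (f b) ≤ T.gromovProduct w (f u) (f v) := by
  induction h with
  | refl => exact ⟨u, u, hr u, le_rfl⟩
  | @tail b c _ hbc ih =>
    obtain ⟨a, a', haa', hle⟩ := ih
    rcases min_le_iff.mp (hT.min_gromovProduct_le w (f u) (f c) (f b)) with h | h
    · exact ⟨a, a', haa', hle.trans h⟩
    · exact ⟨b, c, hbc, h⟩

lemma exists_close_pair_straddling (hT : T.IsTree) (x : ℕ → V) {n j : ℕ} (hj : j ≤ n) {s : ℝ}
    (hs : 0 ≤ s) (hstep : ∀ i < n, (T.dist (x i) (x (i + 1)) : ℝ) ≤ s) :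
    ∃ a b, a ≤ j ∧ j ≤ b ∧ b ≤ n ∧ T.gromovProduct (x j) (x 0) (x n) ≤ T.dist (x j) (x a) ∧
      (T.dist (x a) (x b) : ℝ) ≤ 2 * s := by
  set r := T.gromovProduct (x j) (x 0) (x n)
  have hTc := hT.connected
  by_cases hr : r ≤ 0
  · exact ⟨j, j, le_rfl, le_rfl, hj, by simpa using hr, by simpa using hs⟩
  -- `far i`: `x i` lies beyond the branch point of `x 0`, `x n` seen from `x j`. The sequence
  -- starts and ends far but is not far at `j`, so it leaves the far region before `j` and
  -- re-enters it after `j`, each time by a single jump.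
  set far : ℕ → Prop :=
    fun i => r ≤ T.gromovProduct (x j) (x i) (x 0) ∧ r ≤ T.gromovProduct (x j) (x i) (x n)
  have far_of_le {i k : ℕ} (hi : far i) (hik : r ≤ T.gromovProduct (x j) (x i) (x k)) :
      far k := by
    rw [gromovProduct_comm] at hik
    exact ⟨(le_min hik hi.1).trans (hT.min_gromovProduct_le ..),
      (le_min hik hi.2).trans (hT.min_gromovProduct_le ..)⟩
  have dist_lt_of_far {i k : ℕ} (hi : far i) (hk : ¬ far k) (hik : (T.dist (x i) (x k) : ℝ) ≤ s) :
      (T.dist (x j) (x i) : ℝ) < r + s := by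
    have := hTc.dist_le_gromovProduct_add_dist (x j) (x i) (x k)
    have := lt_of_not_ge (mt (far_of_le hi) hk)
    linarith
  have far_zero : far 0 := ⟨by simpa using hTc.gromovProduct_le_dist (x j) (x 0) (x n), le_rfl⟩
  have far_n : far n := by
    refine ⟨(gromovProduct_comm ..).le, ?_⟩
    simpa using (gromovProduct_comm ..).trans_le (hTc.gromovProduct_le_dist (x j) (x n) (x 0))
  have not_far_j : ¬ far j := fun h => hr (h.1.trans_eq (gromovProduct_self_left ..))
  obtain ⟨a, haj, hfa, hfa'⟩ := Nat.exists_lt_and_not_succ_of_not far_zero not_far_j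
  obtain ⟨k, hk, hfk, hfk'⟩ := Nat.exists_lt_and_not_succ_of_not (p := fun i => ¬ far (j + i))
    (show ¬ far (j + 0) from not_far_j)
    (show ¬ ¬ far (j + (n - j)) by rwa [Nat.add_sub_cancel' hj, not_not])
  rw [not_not, ← add_assoc] at hfk'
  have ha := dist_lt_of_far hfa hfa' (hstep a (by omega))
  have hb := dist_lt_of_far hfk' hfk (by rw [dist_comm]; exact hstep (j + k) (by omega))
  have hab : r ≤ T.gromovProduct (x j) (x a) (x (j + k + 1)) :=
    (le_min hfa.1 (hfk'.1.trans_eq (gromovProduct_comm ..))).trans (hT.min_gromovProduct_le ..)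
  refine ⟨a, j + k + 1, haj.le, by omega, by omega, hfa.1.trans (hTc.gromovProduct_le_dist ..), ?_⟩
  simp only [gromovProduct] at hab
  linarith

end IsTree

lemma Reachable.dist_map_le {G : SimpleGraph V} {G' : SimpleGraph W} (f : G →g G') {a b : V}
    (h : G.Reachable a b) : G'.dist (f a) (f b) ≤ G.dist a b := by
  obtain ⟨p, hp⟩ := h.exists_walk_length_eq_dist
  exact hp ▸ (dist_le (p.map f)).trans_eq (p.length_map f)

lemma Walk.dist_getVert_of_length_eq_dist {G : SimpleGraph V} {u v : V} {p : G.Walk u v}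
    (hp : p.length = G.dist u v) {i j : ℕ} (hij : i ≤ j) (hj : j ≤ p.length) :
    G.dist (p.getVert i) (p.getVert j) = j - i := by
  have h := length_eq_dist_of_subwalk hp (((p.drop i).isSubwalk_take (j - i)).trans
    (p.isSubwalk_drop i))
  rw [Walk.take_length, Walk.drop_length, Walk.drop_getVert, Nat.add_sub_cancel' hij] at h
  omega

def IsQuasiIsometricEmbedding (Γ : SimpleGraph V) (T : SimpleGraph W) (lam C : ℝ) (q : V → W) :
    Prop :=
  ∀ a b : V, (1 / lam) * (Γ.dist a b : ℝ) - C ≤ (T.dist (q a) (q b) : ℝ) ∧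
    (T.dist (q a) (q b) : ℝ) ≤ lam * (Γ.dist a b : ℝ) + C

def IsQuasiconvex (Γ : SimpleGraph V) (S : Set V) (σ : ℝ) : Prop :=
  ∀ u ∈ S, ∀ v ∈ S, ∀ p : Γ.Walk u v, p.length = Γ.dist u v →
    ∀ z ∈ p.support, ∃ s ∈ S, (Γ.dist z s : ℝ) ≤ σ

def IsCoarselyConnected (Γ : SimpleGraph V) (S : Set V) (M : ℕ) : Prop :=
  ∀ u v : S, ReflTransGen (fun a b : S => Γ.dist a b ≤ M) u v

namespace IsQuasiIsometricEmbedding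

variable {Γ : SimpleGraph V} {T : SimpleGraph W} {lam C : ℝ} {q : V → W}

lemma dist_le (hq : Γ.IsQuasiIsometricEmbedding T lam C q) (a b : V) :
    (T.dist (q a) (q b) : ℝ) ≤ lam * Γ.dist a b + C :=
  (hq a b).2

lemma dist_le_mul (hq : Γ.IsQuasiIsometricEmbedding T lam C q) (hlam : 0 < lam) (a b : V) :
    (Γ.dist a b : ℝ) ≤ lam * (T.dist (q a) (q b) + C) := by
  have h := (hq a b).1
  rw [one_div_mul_eq_div, sub_le_iff_le_add, div_le_iff₀ hlam] at h
  linarith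

lemma gromovProduct_le_of_length_eq_dist (hq : Γ.IsQuasiIsometricEmbedding T lam C q)
    (hT : T.IsTree) (hlam : 0 < lam) (hC : 0 ≤ C) {u v : V} {p : Γ.Walk u v}
    (hp : p.length = Γ.dist u v) {j : ℕ} (hj : j ≤ p.length) :
    T.gromovProduct (q (p.getVert j)) (q u) (q v) ≤ lam * (lam * (2 * (lam + C) + C)) + C := by
  have hgeo {i k : ℕ} (hik : i ≤ k) (hk : k ≤ p.length) :=
    Walk.dist_getVert_of_length_eq_dist hp hik hk
  have hstep (i : ℕ) (hi : i < p.length) :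
      (T.dist (q (p.getVert i)) (q (p.getVert (i + 1))) : ℝ) ≤ lam + C := by
    simpa [hgeo i.le_succ hi] using hq.dist_le (p.getVert i) (p.getVert (i + 1))
  obtain ⟨a, b, haj, hjb, hb, hr, hab⟩ :=
    hT.exists_close_pair_straddling (fun i => q (p.getVert i)) hj (by positivity) hstep
  simp only [Walk.getVert_zero, Walk.getVert_length] at hr
  have hba : ((b - a : ℕ) : ℝ) ≤ lam * (2 * (lam + C) + C) := by
    rw [← hgeo (haj.trans hjb) hb]
    calc _ ≤ lam * (T.dist (q (p.getVert a)) (q (p.getVert b)) + C) := hq.dist_le_mul hlam _ _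
      _ ≤ _ := by gcongr
  have hja : (Γ.dist (p.getVert j) (p.getVert a) : ℝ) ≤ (b - a : ℕ) := by
    rw [dist_comm, hgeo haj (hjb.trans hb)]
    exact_mod_cast Nat.sub_le_sub_right hjb a
  calc _ ≤ (T.dist (q (p.getVert j)) (q (p.getVert a)) : ℝ) := hr
    _ ≤ lam * Γ.dist (p.getVert j) (p.getVert a) + C := hq.dist_le _ _
    _ ≤ lam * (lam * (2 * (lam + C) + C)) + C := by gcongr; exact hja.trans hba

theorem isQuasiconvex_of_isCoarselyConnected (hq : Γ.IsQuasiIsometricEmbedding T lam C q)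
    (hT : T.IsTree) (hlam : 0 < lam) (hC : 0 ≤ C) {S : Set V} {M : ℕ}
    (hS : Γ.IsCoarselyConnected S M) :
    Γ.IsQuasiconvex S (lam * (lam * (lam * (2 * (lam + C) + C)) + C + (lam * M + C) + C)) := by
  intro u hu v hv p hp z hz
  obtain ⟨j, rfl, hj⟩ := Walk.mem_support_iff_exists_getVert.mp hz
  obtain ⟨a, b, hab, hle⟩ := hT.exists_gromovProduct_le_of_reflTransGen
    (fun _ => by simp) (q ∘ Subtype.val) (q (p.getVert j)) (hS ⟨u, hu⟩ ⟨v, hv⟩)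
  have hgp := hle.trans (hq.gromovProduct_le_of_length_eq_dist hT hlam hC hp hj)
  have hdist := hT.connected.dist_le_gromovProduct_add_dist (q (p.getVert j)) (q a) (q b)
  have hab' : (T.dist (q a) (q b) : ℝ) ≤ lam * M + C := (hq.dist_le a b).trans (by gcongr)
  refine ⟨a, a.2, (hq.dist_le_mul hlam _ _).trans ?_⟩
  simp only [Function.comp_apply] at hgp
  gcongr
  linarith

end IsQuasiIsometricEmbedding

end SimpleGraph

section Cayley

variable {G : Type*} [Group G] {X : Set G}

def cayleyGraphMulLeft (X : Set G) (g : G) : cayleyGraph G X →g cayleyGraph G X where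
  toFun x := g * x
  map_rel' := by
    rintro x y ⟨hne, hxy⟩
    refine ⟨fun h => hne (mul_left_cancel h), ?_⟩
    simpa only [mul_inv_rev, mul_assoc, inv_mul_cancel_left] using hxy

lemma cayleyGraph_dist_mul_le (hconn : (cayleyGraph G X).Connected) (g a b : G) :
    (cayleyGraph G X).dist (g * a) (g * b) ≤ (cayleyGraph G X).dist a b :=
  (hconn a b).dist_map_le (cayleyGraphMulLeft X g)

theorem Subgroup.FG.exists_isCoarselyConnected {H : Subgroup G}
    (hconn : (cayleyGraph G X).Connected) (hH : H.FG) :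
    ∃ M, (cayleyGraph G X).IsCoarselyConnected H M := by
  obtain ⟨S, rfl⟩ := hH
  set M := S.sup ((cayleyGraph G X).dist 1)
  set R : (Subgroup.closure (S : Set G) : Set G) → (Subgroup.closure (S : Set G) : Set G) → Prop :=
    fun a b => (cayleyGraph G X).dist a b ≤ M
  have : Std.Symm R := ⟨fun _ _ h => SimpleGraph.dist_comm.trans_le h⟩
  have chain (h : G) (hh : h ∈ Subgroup.closure (S : Set G)) :
      ∀ g (hg : g ∈ Subgroup.closure (S : Set G)),
        ReflTransGen R ⟨g, hg⟩ ⟨g * h, mul_mem hg hh⟩ := by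
    induction hh using Subgroup.closure_induction with
    | mem s hs =>
      intro g hg
      refine .single ((?_ : _ ≤ (cayleyGraph G X).dist 1 s).trans (Finset.le_sup hs))
      simpa using cayleyGraph_dist_mul_le hconn g 1 s
    | one => intro g hg; simpa using ReflTransGen.refl
    | mul x y hx hy ihx ihy =>
      intro g hg
      exact (ihx g hg).trans (by simpa only [mul_assoc] using ihy (g * x) (mul_mem hg hx))
    | inv x hx ih =>
      intro g hg
      simpa using Std.Symm.symm _ _ (ih (g * x⁻¹) (mul_mem hg (inv_mem hx)))
  refine ⟨M, fun u v => ?_⟩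
  simpa [R] using chain (u⁻¹ * v) (mul_mem (inv_mem u.2) v.2) u u.2

end Cayley

theorem fg_subgroup_quasiconvex_in_quasiTree_cayley_general
    {G : Type*} [Group G] (X : Set G)
    (hqt : (cayleyGraph G X).IsQuasiTree)
    (H : Subgroup G) (hH : H.FG) :
    ∃ σ : ℝ, 0 < σ ∧
      ∀ u ∈ H, ∀ v ∈ H, ∀ p : (cayleyGraph G X).Walk u v,
        p.length = (cayleyGraph G X).dist u v →
          ∀ z ∈ p.support, ∃ s ∈ H, ((cayleyGraph G X).dist z s : ℝ) ≤ σ := by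
  obtain ⟨hconn, V', T, hT, q, lam, C, hlam, hC, hq, -⟩ := hqt
  obtain ⟨M, hM⟩ := hH.exists_isCoarselyConnected hconn
  have hlam₀ : 0 < lam := by linarith
  exact ⟨_, by positivity,
    SimpleGraph.IsQuasiIsometricEmbedding.isQuasiconvex_of_isCoarselyConnected hq hT hlam₀ hC hM⟩

/-- If the Cayley graph `Γ(G,X)` is a quasi-tree, then every finitely
generated subgroup `H ≤ G` is quasi-convex in `Γ(G,X)`. -/
theorem fg_subgroup_quasiconvex_in_quasiTree_cayley
    {G : Type*} [Group G] (X : Set G) (hX : Subgroup.closure X = ⊤)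
    (hqt : (cayleyGraph G X).IsQuasiTree)
    (H : Subgroup G) (hH : H.FG) :
    ∃ σ : ℝ, 0 < σ ∧
      ∀ u ∈ H, ∀ v ∈ H, ∀ p : (cayleyGraph G X).Walk u v,
        p.length = (cayleyGraph G X).dist u v →
          ∀ z ∈ p.support, ∃ s ∈ H, ((cayleyGraph G X).dist z s : ℝ) ≤ σ :=
  fg_subgroup_quasiconvex_in_quasiTree_cayley_general X hqt H hH
end
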